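/- arXiv:1305.2266 — 6 statements merged into one kernel-verified Lean document; each statement's English description precedes it below -/
import Mathlib

section
/- For every integer n ≥ 3 there exists a positive integer N such that any set of N points in the Euclidean plane, no three collinear, contains n points in convex position (i.e., n points that are the vertices of a convex polygon). -/
/-!
Order the points lexicographically and colour each triple by the sign of its orientation. By
Ramsey's theorem for 3-uniform hypergraphs, enough points in general position contain `n` points
all of whose increasing triples are oriented the same way. Such a chain is in convex position:
each of its points is strictly separated from the others by the line through its two cyclic
neighbours.
-/

/-- No three of the points of `S` are collinear. -/
def NoThreeCollinear (S : Set (ℝ × ℝ)) : Prop :=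
  ∀ p ∈ S, ∀ q ∈ S, ∀ r ∈ S, p ≠ q → p ≠ r → q ≠ r →
    AffineIndependent ℝ ![p, q, r]

/-- A set of points is in convex position (convexly independent). -/
def ConvexIndep (S : Set (ℝ × ℝ)) : Prop :=
  ∀ p ∈ S, p ∉ convexHull ℝ (S \ {p})

open Finset

section Ramsey

variable {α : Type*}

def IsHomogeneous (r : ℕ) (P : Finset α → Prop) (T : Finset α) : Prop :=
  ∀ s ⊆ T, #s = r → P s

-- The Ramsey arrow relation `N → (p, q)^r`, for 2-colourings given by a predicate `P`.
variable (α) in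
def Arrows (N r p q : ℕ) : Prop :=
  ∀ V : Finset α, N ≤ #V → ∀ P : Finset α → Prop,
    (∃ T ⊆ V, #T = p ∧ IsHomogeneous r P T) ∨ (∃ T ⊆ V, #T = q ∧ IsHomogeneous r (¬ P ·) T)

lemma isHomogeneous_empty (r : ℕ) (P : Finset α → Prop) : IsHomogeneous (r + 1) P ∅ := by
  intro s hs hsr
  rw [subset_empty.1 hs, card_empty] at hsr
  omega

lemma IsHomogeneous.insert [DecidableEq α] {r : ℕ} {P : Finset α → Prop} {A T : Finset α} {v : α}
    (hT : IsHomogeneous (r + 1) P T) (hTA : T ⊆ A)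
    (hA : IsHomogeneous r (fun s ↦ P (insert v s)) A) : IsHomogeneous (r + 1) P (insert v T) := by
  intro s hs hsr
  by_cases hvs : v ∈ s
  · rw [← insert_erase hvs]
    refine hA _ (fun x hx ↦ ?_) (by rw [card_erase_of_mem hvs, hsr]; rfl)
    exact hTA ((mem_insert.1 (hs (mem_of_mem_erase hx))).resolve_left (ne_of_mem_erase hx))
  · exact hT s ((subset_insert_iff_of_notMem hvs).1 hs) hsr

lemma exists_insert_isHomogeneous [DecidableEq α] {r : ℕ} {P : Finset α → Prop}
    {V A T : Finset α} {v : α}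
    (hv : v ∈ V) (hAV : A ⊆ V.erase v) (hTA : T ⊆ A)
    (hA : IsHomogeneous r (fun s ↦ P (insert v s)) A) (hT : IsHomogeneous (r + 1) P T) :
    ∃ T' ⊆ V, #T' = #T + 1 ∧ IsHomogeneous (r + 1) P T' := by
  have hvA : v ∉ A := fun h ↦ (mem_erase.1 (hAV h)).1 rfl
  exact ⟨insert v T, insert_subset hv (hTA.trans (hAV.trans (erase_subset _ _))),
    card_insert_of_notMem (fun h ↦ hvA (hTA h)), hT.insert hTA hA⟩

lemma arrows_zero (p q : ℕ) : Arrows α (p + q) 0 p q := by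
  intro V hV P
  have hempty : ∀ s : Finset α, #s = 0 → s = ∅ := fun s ↦ card_eq_zero.1
  by_cases hP : P ∅
  · obtain ⟨T, hTV, hT⟩ := exists_subset_card_eq (show p ≤ #V by omega)
    exact Or.inl ⟨T, hTV, hT, fun s _ hs ↦ hempty s hs ▸ hP⟩
  · obtain ⟨T, hTV, hT⟩ := exists_subset_card_eq (show q ≤ #V by omega)
    exact Or.inr ⟨T, hTV, hT, fun s _ hs ↦ hempty s hs ▸ hP⟩

-- `R(r+1; p+1, q+1) ≤ R(r; R(r+1; p, q+1), R(r+1; p+1, q)) + 1`,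
-- colouring each `r`-set `s` avoiding a fixed vertex `v` by the colour of `insert v s`.
lemma exists_arrows_succ [DecidableEq α] {r : ℕ} (h : ∀ p q, ∃ N, Arrows α N r p q) (p q : ℕ) :
    ∃ N, Arrows α N (r + 1) p q := by
  induction p generalizing q with
  | zero => exact ⟨0, fun _ _ _ ↦ Or.inl ⟨∅, empty_subset _, rfl, isHomogeneous_empty _ _⟩⟩
  | succ p ihp =>
    induction q with
    | zero => exact ⟨0, fun _ _ _ ↦ Or.inr ⟨∅, empty_subset _, rfl, isHomogeneous_empty _ _⟩⟩
    | succ q ihq =>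
      obtain ⟨Np, hNp⟩ := ihp (q + 1)
      obtain ⟨Nq, hNq⟩ := ihq
      obtain ⟨M, hM⟩ := h Np Nq
      refine ⟨M + 1, fun V hV P ↦ ?_⟩
      obtain ⟨v, hv⟩ := card_pos.1 (by omega : 0 < #V)
      have hW : M ≤ #(V.erase v) := by rw [card_erase_of_mem hv]; omega
      have hWV : V.erase v ⊆ V := erase_subset _ _
      rcases hM _ hW (fun s ↦ P (insert v s)) with ⟨A, hAV, hA, hAP⟩ | ⟨A, hAV, hA, hAP⟩
      · rcases hNp A hA.ge P with ⟨T, hTA, rfl, hT⟩ | ⟨T, hTA, hT, hTP⟩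
        · exact Or.inl (exists_insert_isHomogeneous hv hAV hTA hAP hT)
        · exact Or.inr ⟨T, hTA.trans (hAV.trans hWV), hT, hTP⟩
      · rcases hNq A hA.ge P with ⟨T, hTA, hT, hTP⟩ | ⟨T, hTA, rfl, hT⟩
        · exact Or.inl ⟨T, hTA.trans (hAV.trans hWV), hT, hTP⟩
        · exact Or.inr (exists_insert_isHomogeneous hv hAV hTA hAP hT)

variable (α) in
theorem exists_arrows [DecidableEq α] (r p q : ℕ) : ∃ N, Arrows α N r p q := by
  induction r generalizing p q with
  | zero => exact ⟨p + q, arrows_zero p q⟩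
  | succ r ih => exact exists_arrows_succ ih p q

end Ramsey

-- Twice the signed area of the triangle `abc`, positive iff `a, b, c` turn counterclockwise.
def orient (a b c : ℝ × ℝ) : ℝ :=
  (b.1 - a.1) * (c.2 - a.2) - (b.2 - a.2) * (c.1 - a.1)

lemma orient_rotate (a b c : ℝ × ℝ) : orient a b c = orient b c a := by unfold orient; ring

lemma orient_swap (a b c : ℝ × ℝ) : orient a b c = -orient a c b := by unfold orient; ring

@[simp] lemma orient_self_left (a b : ℝ × ℝ) : orient a b a = 0 := by unfold orient; ring

@[simp] lemma orient_self_right (a b : ℝ × ℝ) : orient a b b = 0 := by unfold orient; ring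

lemma convex_orient_nonneg (a b : ℝ × ℝ) : Convex ℝ {x | 0 ≤ orient a b x} := by
  intro x hx y hy s t hs ht hst
  have : orient a b (s • x + t • y) = s * orient a b x + t * orient a b y := by
    simp only [orient, Prod.fst_add, Prod.snd_add, Prod.smul_fst, Prod.smul_snd, smul_eq_mul]
    linear_combination ((b.1 - a.1) * a.2 - (b.2 - a.2) * a.1) * hst
  simp only [Set.mem_ofPred_eq, this] at hx hy ⊢
  positivity

lemma notMem_convexHull_of_orient_neg {a b p : ℝ × ℝ} {X : Set (ℝ × ℝ)}
    (hX : ∀ x ∈ X, 0 ≤ orient a b x) (hp : orient a b p < 0) : p ∉ convexHull ℝ X :=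
  fun h ↦ hp.not_ge (convexHull_min hX (convex_orient_nonneg a b) h)

lemma orient_ne_zero_of_affineIndependent {a b c : ℝ × ℝ}
    (h : AffineIndependent ℝ ![a, b, c]) : orient a b c ≠ 0 := by
  intro h0
  -- the affine dependence `(y - x) a + x b - y c = 0` must be trivial
  have key : ∀ x y : ℝ, x * (b.1 - a.1) = y * (c.1 - a.1) → x * (b.2 - a.2) = y * (c.2 - a.2) →
      x = 0 ∧ y = 0 := fun x y h₁ h₂ ↦ by
    have hxy : x • (b - a) - y • (c - a) = 0 := Prod.ext
      (by simp only [Prod.fst_sub, Prod.smul_fst, smul_eq_mul, Prod.fst_zero]; linarith)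
      (by simp only [Prod.snd_sub, Prod.smul_snd, smul_eq_mul, Prod.snd_zero]; linarith)
    have := h.eq_zero_of_sum_eq_zero (s := univ) (w := ![y - x, x, -y])
      (by simp [Fin.sum_univ_three])
      (by simp only [Fin.sum_univ_three, Matrix.cons_val]; rw [← hxy]; module)
    exact ⟨this 1 (mem_univ _), neg_eq_zero.1 (this 2 (mem_univ _))⟩
  have h₂ := key (c.2 - a.2) (b.2 - a.2) (by unfold orient at h0; linarith) (by ring)
  have h₁ := key (c.1 - a.1) (b.1 - a.1) (by ring) (by unfold orient at h0; linarith)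
  exact one_ne_zero (key 1 0 (by linarith) (by linarith)).1

section Chains

variable {α : Type*} [LinearOrder α]

def CounterclockwiseOn (f : α → ℝ × ℝ) (s : Set α) : Prop :=
  ∀ ⦃i⦄, i ∈ s → ∀ ⦃j⦄, j ∈ s → ∀ ⦃k⦄, k ∈ s → i < j → j < k → 0 < orient (f i) (f j) (f k)

def ClockwiseOn (f : α → ℝ × ℝ) (s : Set α) : Prop :=
  ∀ ⦃i⦄, i ∈ s → ∀ ⦃j⦄, j ∈ s → ∀ ⦃k⦄, k ∈ s → i < j → j < k → orient (f i) (f j) (f k) < 0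

-- Every point `q j` is strictly separated from the others by the line through its two
-- cyclic neighbours.
lemma convexIndep_range_of_counterclockwiseOn {m : ℕ} (hm : 3 ≤ m) {q : Fin m → ℝ × ℝ}
    (hq : CounterclockwiseOn q Set.univ) : ConvexIndep (Set.range q) := by
  have hcyc : ∀ i j k : Fin m, sbtw i j k → 0 < orient (q i) (q j) (q k) := by
    rintro i j k (⟨hij, hjk⟩ | ⟨hjk, hki⟩ | ⟨hki, hij⟩)
    · exact hq trivial trivial trivial hij hjk
    · rw [orient_rotate]; exact hq trivial trivial trivial hjk hki
    · rw [← orient_rotate]; exact hq trivial trivial trivial hki hij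
  rintro _ ⟨j, rfl⟩
  obtain ⟨a, b, hajb, habk⟩ :
      ∃ a b : Fin m, sbtw a j b ∧ ∀ k, k ≠ j → k ≠ a → k ≠ b → sbtw a b k := by
    have := j.isLt
    simp only [Fin.sbtw_iff, Fin.lt_def, ne_eq, Fin.ext_iff]
    rcases (by omega : j.val = 0 ∨ j.val = m - 1 ∨ 0 < j.val ∧ j.val < m - 1) with h | h | h
    · exact ⟨⟨m - 1, by omega⟩, ⟨1, by omega⟩, by dsimp only; omega,
        fun k ↦ by have := k.isLt; dsimp only; omega⟩
    · exact ⟨⟨m - 2, by omega⟩, ⟨0, by omega⟩, by dsimp only; omega,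
        fun k ↦ by have := k.isLt; dsimp only; omega⟩
    · exact ⟨⟨j - 1, by omega⟩, ⟨j + 1, by omega⟩, by dsimp only; omega,
        fun k ↦ by have := k.isLt; dsimp only; omega⟩
  refine notMem_convexHull_of_orient_neg (a := q a) (b := q b) ?_ ?_
  · rintro _ ⟨⟨k, rfl⟩, hqk⟩
    have hkj : k ≠ j := by rintro rfl; exact hqk rfl
    by_cases hka : k = a
    · simp [hka]
    by_cases hkb : k = b
    · simp [hkb]
    exact (hcyc a b k (habk k hkj hka hkb)).le
  · rw [orient_swap]
    exact neg_neg_of_pos (hcyc a j b hajb)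

lemma CounterclockwiseOn.convexIndep_image {f : α → ℝ × ℝ} {T : Finset α}
    (hf : CounterclockwiseOn f T) (hT : 3 ≤ #T) : ConvexIndep (f '' T) := by
  set e := T.orderEmbOfFin rfl
  have hq : CounterclockwiseOn (f ∘ e) Set.univ := fun i _ j _ k _ hij hjk ↦
    hf (T.orderEmbOfFin_mem rfl i) (T.orderEmbOfFin_mem rfl j) (T.orderEmbOfFin_mem rfl k)
      (e.strictMono hij) (e.strictMono hjk)
  rw [← T.range_orderEmbOfFin rfl, ← Set.range_comp]
  exact convexIndep_range_of_counterclockwiseOn hT hq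

lemma ClockwiseOn.convexIndep_image {f : α → ℝ × ℝ} {T : Finset α}
    (hf : ClockwiseOn f T) (hT : 3 ≤ #T) : ConvexIndep (f '' T) :=
  CounterclockwiseOn.convexIndep_image (α := αᵒᵈ) (fun i hi j hj k hk hij hjk ↦ by
    rw [orient_rotate, orient_swap, ← orient_rotate]
    exact neg_pos.2 (hf hk hj hi hjk hij)) hT

lemma card_triple {i j k : α} (hij : i < j) (hjk : j < k) : #{i, j, k} = 3 :=
  card_eq_three.2 ⟨i, j, k, hij.ne, (hij.trans hjk).ne, hjk.ne, rfl⟩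

lemma IsHomogeneous.counterclockwiseOn {f : α → ℝ × ℝ} {T : Finset α}
    (hT : IsHomogeneous 3 (fun s ↦ CounterclockwiseOn f s) T) : CounterclockwiseOn f T := by
  intro i hi j hj k hk hij hjk
  exact hT {i, j, k} (insert_subset hi (insert_subset hj (singleton_subset_iff.2 hk)))
    (card_triple hij hjk) (by simp) (by simp) (by simp) hij hjk

lemma IsHomogeneous.clockwiseOn {f : α → ℝ × ℝ} {T : Finset α}
    (hf : ∀ ⦃i⦄, i ∈ T → ∀ ⦃j⦄, j ∈ T → ∀ ⦃k⦄, k ∈ T → i < j → j < k →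
      orient (f i) (f j) (f k) ≠ 0)
    (hT : IsHomogeneous 3 (fun s ↦ ¬ CounterclockwiseOn f s) T) : ClockwiseOn f T := by
  intro i hi j hj k hk hij hjk
  refine (hf hi hj hk hij hjk).lt_of_le (not_lt.1 fun hpos ↦ hT {i, j, k}
    (insert_subset hi (insert_subset hj (singleton_subset_iff.2 hk))) (card_triple hij hjk) ?_)
  intro i' hi' j' hj' k' hk' hij' hjk'
  simp only [coe_insert, coe_singleton, Set.mem_insert_iff, Set.mem_singleton_iff] at hi' hj' hk'
  -- the only increasing triple in `{i, j, k}` is `(i, j, k)`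
  obtain ⟨rfl, rfl, rfl⟩ : i' = i ∧ j' = j ∧ k' = k := by
    rcases hi' with rfl | rfl | rfl <;> rcases hj' with rfl | rfl | rfl <;>
      rcases hk' with rfl | rfl | rfl <;> first | exact ⟨rfl, rfl, rfl⟩ | order
  exact hpos

theorem exists_counterclockwiseOn_or_clockwiseOn (n : ℕ) : ∃ N, ∀ (V : Finset α) (f : α → ℝ × ℝ),
    N ≤ #V → (∀ ⦃i⦄, i ∈ V → ∀ ⦃j⦄, j ∈ V → ∀ ⦃k⦄, k ∈ V → i < j → j < k →
      orient (f i) (f j) (f k) ≠ 0) →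
    ∃ T ⊆ V, #T = n ∧ (CounterclockwiseOn f T ∨ ClockwiseOn f T) := by
  obtain ⟨N, hN⟩ := exists_arrows α 3 n n
  refine ⟨N, fun V f hV hf ↦ ?_⟩
  rcases hN V hV (fun s ↦ CounterclockwiseOn f s) with ⟨T, hTV, hT, hccw⟩ | ⟨T, hTV, hT, hcw⟩
  · exact ⟨T, hTV, hT, Or.inl hccw.counterclockwiseOn⟩
  · exact ⟨T, hTV, hT, Or.inr (hcw.clockwiseOn fun i hi j hj k hk ↦ hf (hTV hi) (hTV hj) (hTV hk))⟩

end Chains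

theorem erdos_szekeres_happy_ending :
    ∀ n : ℕ, 3 ≤ n → ∃ N : ℕ, 0 < N ∧
      ∀ S : Finset (ℝ × ℝ), S.card = N → NoThreeCollinear ↑S →
        ∃ T : Finset (ℝ × ℝ), T ⊆ S ∧ T.card = n ∧ ConvexIndep ↑T := by
  intro n hn
  obtain ⟨N, hN⟩ := exists_counterclockwiseOn_or_clockwiseOn (α := ℝ ×ₗ ℝ) n
  refine ⟨N + 1, N.succ_pos, fun S hS hcol ↦ ?_⟩
  set V := S.map toLex.toEmbedding
  have hmem : ∀ ⦃x⦄, x ∈ V → ofLex x ∈ S := fun x hx ↦ mem_map_equiv.1 hx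
  obtain ⟨T, hTV, rfl, hT⟩ := hN V ofLex (by simp [V, hS]) fun i hi j hj k hk hij hjk ↦
    orient_ne_zero_of_affineIndependent
      (hcol _ (hmem hi) _ (hmem hj) _ (hmem hk) hij.ne (hij.trans hjk).ne hjk.ne)
  refine ⟨T.map ofLex.toEmbedding, fun x hx ↦ ?_, card_map _, ?_⟩
  · obtain ⟨y, hy, rfl⟩ := mem_map.1 hx
    exact hmem (hTV hy)
  · rw [coe_map]
    exact hT.elim (·.convexIndep_image hn) (·.convexIndep_image hn)
end

section
/- Any set of C(2n-4, n-2) + 1 points in general position in the plane contains n points in convex position. -/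
/-!
After a shear, all abscissae are distinct; shears preserve general and convex position.
Call an x-monotone set a cup (cap) if each of its triples turns left (right).
By the Erdős–Szekeres recursion, `C(a + b, a) + 1` points contain an `(a + 2)`-cup or a
`(b + 2)`-cap: let `E` be the set of right endpoints of `(a + 2)`-cups. Either `S \ E`, which has
no `(a + 2)`-cup, is large and contains a `(b + 3)`-cap, or `E` contains a `(b + 2)`-cap; its
leftmost point also ends an `(a + 2)`-cup, and whichever way the path turns at this junction,
one of the two extends by a point. Cups and caps are in convex position, and `a = b = n - 2`
gives the theorem.
-/

open Finset Pointwise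

lemma ConvexIndep.mono {s t : Set (ℝ × ℝ)} (ht : ConvexIndep t) (hst : s ⊆ t) : ConvexIndep s :=
  fun p hp hmem ↦ ht p (hst hp) (convexHull_mono (Set.sdiff_subset_sdiff_left hst) hmem)

lemma ConvexIndep.of_image {f : ℝ × ℝ →ₗ[ℝ] ℝ × ℝ} (hf : Function.Injective f)
    {s : Set (ℝ × ℝ)} (h : ConvexIndep (f '' s)) : ConvexIndep s := by
  intro p hp hmem
  refine h (f p) (Set.mem_image_of_mem f hp) ?_
  rw [← Set.image_singleton, ← Set.image_sdiff hf, ← f.image_convexHull]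
  exact Set.mem_image_of_mem f hmem

lemma NoThreeCollinear.mono {s t : Set (ℝ × ℝ)} (ht : NoThreeCollinear t) (hst : s ⊆ t) :
    NoThreeCollinear s :=
  fun p hp q hq r hr ↦ ht p (hst hp) q (hst hq) r (hst hr)

lemma NoThreeCollinear.image {f : ℝ × ℝ →ₗ[ℝ] ℝ × ℝ} (hf : Function.Injective f)
    {s : Set (ℝ × ℝ)} (h : NoThreeCollinear s) : NoThreeCollinear (f '' s) := by
  rintro _ ⟨p, hp, rfl⟩ _ ⟨q, hq, rfl⟩ _ ⟨r, hr, rfl⟩ hpq hpr hqr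
  convert (h p hp q hq r hr (ne_of_apply_ne f hpq) (ne_of_apply_ne f hpr)
    (ne_of_apply_ne f hqr)).map' f.toAffineMap hf using 1
  · -- the `AddTorsor` instances of `ℝ × ℝ` as a product and as a group agree
    rfl
  · funext i
    fin_cases i <;> rfl

namespace ErdosSzekeres

def cross (a b c : ℝ × ℝ) : ℝ := (b.1 - a.1) * (c.2 - a.2) - (b.2 - a.2) * (c.1 - a.1)

noncomputable def slope (a b : ℝ × ℝ) : ℝ := (b.2 - a.2) / (b.1 - a.1)

lemma cross_neg_rev (a b c : ℝ × ℝ) : cross (-c) (-b) (-a) = -cross a b c := by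
  simp only [cross, Prod.fst_neg, Prod.snd_neg]
  ring

lemma cross_ne_zero_of_affineIndependent {p q r : ℝ × ℝ} (h : AffineIndependent ℝ ![p, q, r]) :
    cross p q r ≠ 0 := by
  have key : ∀ α β : ℝ, α * (q.1 - p.1) + β * (r.1 - p.1) = 0 →
      α * (q.2 - p.2) + β * (r.2 - p.2) = 0 → α = 0 ∧ β = 0 := by
    intro α β h₁ h₂
    have := h.eq_zero_of_sum_eq_zero (s := univ) (w := ![-(α + β), α, β])
      (by simp [Fin.sum_univ_three]) (by
        simp only [Fin.sum_univ_three, Matrix.cons_val_zero, Matrix.cons_val_one, Matrix.cons_val]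
        have : α • (q - p) + β • (r - p) = 0 := Prod.ext h₁ h₂
        linear_combination (norm := module) this)
    exact ⟨by simpa using this 1 (mem_univ _), by simpa using this 2 (mem_univ _)⟩
  intro h0
  unfold cross at h0
  -- `cross p q r = 0` makes `(r - p).i • (q - p) - (q - p).i • (r - p)` vanish for `i = 1, 2`,
  -- so affine independence forces `r = p`
  have h2 := (key (r.2 - p.2) (-(q.2 - p.2)) (by linear_combination h0) (by ring)).1
  have h1 := (key (r.1 - p.1) (-(q.1 - p.1)) (by ring) (by linear_combination -h0)).1
  exact one_ne_zero (key 0 1 (by linarith) (by linarith)).2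

lemma _root_.NoThreeCollinear.cross_ne_zero {s : Set (ℝ × ℝ)} (h : NoThreeCollinear s)
    {p q r : ℝ × ℝ} (hp : p ∈ s) (hq : q ∈ s) (hr : r ∈ s) (hpq : p.1 < q.1) (hqr : q.1 < r.1) :
    cross p q r ≠ 0 :=
  cross_ne_zero_of_affineIndependent <| h p hp q hq r hr (fun h ↦ hpq.ne (congrArg _ h))
    (fun h ↦ (hpq.trans hqr).ne (congrArg _ h)) (fun h ↦ hqr.ne (congrArg _ h))

section Slopes

variable {a b c : ℝ × ℝ}

lemma cross_pos_iff_slope_lt_slope (hab : a.1 < b.1) (hbc : b.1 < c.1) :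
    0 < cross a b c ↔ slope a b < slope b c := by
  have key : cross a b c = (b.1 - a.1) * (c.1 - b.1) * (slope b c - slope a b) := by
    unfold cross slope
    field_simp [(sub_pos.2 hab).ne', (sub_pos.2 hbc).ne']
    ring
  rw [key, mul_pos_iff_of_pos_left (mul_pos (sub_pos.2 hab) (sub_pos.2 hbc)), sub_pos]

lemma cross_pos_iff_slope_lt_slope_left (hab : a.1 < b.1) (hbc : b.1 < c.1) :
    0 < cross a b c ↔ slope a b < slope a c := by
  have key : cross a b c = (b.1 - a.1) * (c.1 - a.1) * (slope a c - slope a b) := by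
    unfold cross slope
    field_simp [(sub_pos.2 hab).ne', (sub_pos.2 (hab.trans hbc)).ne']
  rw [key, mul_pos_iff_of_pos_left (mul_pos (sub_pos.2 hab) (sub_pos.2 (hab.trans hbc))), sub_pos]

lemma cross_pos_iff_slope_lt_slope_right (hab : a.1 < b.1) (hbc : b.1 < c.1) :
    0 < cross a b c ↔ slope a c < slope b c := by
  have key : cross a b c = (c.1 - a.1) * (c.1 - b.1) * (slope b c - slope a c) := by
    unfold cross slope
    field_simp [(sub_pos.2 hbc).ne', (sub_pos.2 (hab.trans hbc)).ne']
    ring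
  rw [key, mul_pos_iff_of_pos_left (mul_pos (sub_pos.2 (hab.trans hbc)) (sub_pos.2 hbc)), sub_pos]

end Slopes

lemma cross_pos_of_cross_pos {w x y z : ℝ × ℝ} (hwx : w.1 < x.1) (hxy : x.1 < y.1)
    (hyz : y.1 < z.1) (hwxy : 0 < cross w x y) (hxyz : 0 < cross x y z) :
    0 < cross w x z ∧ 0 < cross w y z := by
  constructor
  · rw [cross_pos_iff_slope_lt_slope hwx (hxy.trans hyz)]
    exact ((cross_pos_iff_slope_lt_slope hwx hxy).1 hwxy).trans
      ((cross_pos_iff_slope_lt_slope_left hxy hyz).1 hxyz)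
  · rw [cross_pos_iff_slope_lt_slope (hwx.trans hxy) hyz]
    exact ((cross_pos_iff_slope_lt_slope_right hwx hxy).1 hwxy).trans
      ((cross_pos_iff_slope_lt_slope hxy hyz).1 hxyz)

def IsCup (T : Finset (ℝ × ℝ)) : Prop :=
  ∀ a ∈ T, ∀ b ∈ T, ∀ c ∈ T, a.1 < b.1 → b.1 < c.1 → 0 < cross a b c

def IsCap (T : Finset (ℝ × ℝ)) : Prop :=
  ∀ a ∈ T, ∀ b ∈ T, ∀ c ∈ T, a.1 < b.1 → b.1 < c.1 → cross a b c < 0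

lemma isCup_of_card_le_two {T : Finset (ℝ × ℝ)} (hT : T.card ≤ 2) : IsCup T := by
  intro a ha b hb c hc hab hbc
  refine absurd (two_lt_card.2 ⟨a, ha, b, hb, c, hc, ?_, ?_, ?_⟩) hT.not_gt <;> rintro rfl
  exacts [hab.false, (hab.trans hbc).false, hbc.false]

lemma isCup_neg_iff {T : Finset (ℝ × ℝ)} : IsCup (-T) ↔ IsCap T := by
  constructor
  · intro h a ha b hb c hc hab hbc
    have := h (-c) (by simpa [mem_neg']) (-b) (by simpa [mem_neg']) (-a) (by simpa [mem_neg'])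
      (by simpa using hbc) (by simpa using hab)
    rwa [cross_neg_rev, neg_pos] at this
  · intro h c hc b hb a ha hcb hba
    rw [mem_neg'] at ha hb hc
    have := h (-a) ha (-b) hb (-c) hc (by simpa using hba) (by simpa using hcb)
    rwa [← neg_neg a, ← neg_neg b, ← neg_neg c, cross_neg_rev, neg_pos]

lemma isCap_of_card_le_two {T : Finset (ℝ × ℝ)} (hT : T.card ≤ 2) : IsCap T :=
  isCup_neg_iff.1 (isCup_of_card_le_two (by rwa [card_neg]))

lemma IsCup.insert_right {T : Finset (ℝ × ℝ)} {p q r : ℝ × ℝ} (hT : IsCup T)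
    (hx : Set.InjOn Prod.fst (T : Set (ℝ × ℝ))) (hp : p ∈ T) (hq : q ∈ T) (hqp : q.1 < p.1)
    (hq_max : ∀ z ∈ T.erase p, z.1 ≤ q.1) (hpr : p.1 < r.1) (hqpr : 0 < cross q p r) :
    IsCup (insert r T) := by
  have hleft : ∀ z ∈ T, z ≠ p → z.1 < p.1 := fun z hz hzp ↦
    (hq_max z (mem_erase.2 ⟨hzp, hz⟩)).trans_lt hqp
  have hright : ∀ z ∈ insert r T, z.1 ≤ r.1 := by
    refine forall_mem_insert _ _ _ |>.2 ⟨le_rfl, fun z hz ↦ ?_⟩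
    obtain rfl | hzp := eq_or_ne z p
    exacts [hpr.le, (hleft z hz hzp).le.trans hpr.le]
  have hend : ∀ a ∈ T, a.1 < p.1 → 0 < cross a p r := by
    intro a ha hap
    obtain rfl | haq := eq_or_ne a q
    · exact hqpr
    have haq' : a.1 < q.1 := (hq_max a (mem_erase.2 ⟨(hap.ne <| congrArg _ ·), ha⟩)).lt_of_ne
      fun h ↦ haq (hx ha hq h)
    exact (cross_pos_of_cross_pos haq' hqp hpr (hT a ha q hq p hp haq' hqp) hqpr).2
  intro a ha b hb c hc hab hbc
  have ha' : a ∈ T := (mem_insert.1 ha).resolve_left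
    fun h ↦ (hab.trans_le (hright b hb)).ne (congrArg _ h)
  have hb' : b ∈ T := (mem_insert.1 hb).resolve_left
    fun h ↦ (hbc.trans_le (hright c hc)).ne (congrArg _ h)
  obtain rfl | hc' := mem_insert.1 hc
  · obtain rfl | hbp := eq_or_ne b p
    · exact hend a ha' hab
    have hbp' := hleft b hb' hbp
    exact (cross_pos_of_cross_pos hab hbp' hpr (hT a ha' b hb' p hp hab hbp')
      (hend b hb' hbp')).1
  · exact hT a ha' b hb' c hc' hab hbc

lemma injOn_fst_neg {T : Finset (ℝ × ℝ)} (hx : Set.InjOn Prod.fst (T : Set (ℝ × ℝ))) :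
    Set.InjOn Prod.fst ((-T : Finset (ℝ × ℝ)) : Set (ℝ × ℝ)) := by
  intro z hz w hw h
  rw [coe_neg, Set.mem_neg] at hz hw
  simpa using hx hz hw (by simpa using h)

lemma IsCap.insert_left {C : Finset (ℝ × ℝ)} {p q r : ℝ × ℝ} (hC : IsCap C)
    (hx : Set.InjOn Prod.fst (C : Set (ℝ × ℝ))) (hp : p ∈ C) (hr : r ∈ C) (hpr : p.1 < r.1)
    (hr_min : ∀ z ∈ C.erase p, r.1 ≤ z.1) (hqp : q.1 < p.1) (hqpr : cross q p r < 0) :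
    IsCap (insert q C) := by
  rw [← isCup_neg_iff, neg_insert]
  refine (isCup_neg_iff.2 hC).insert_right (p := -p) (q := -r) ?_ (by simpa [mem_neg'])
    (by simpa [mem_neg']) (by simpa using hpr) ?_ (by simpa using hqp)
    (by rwa [cross_neg_rev, neg_pos])
  · exact injOn_fst_neg hx
  · intro z hz
    rw [mem_erase, mem_neg'] at hz
    have := hr_min (-z) (mem_erase.2 ⟨by simpa [neg_eq_iff_eq_neg] using hz.1, hz.2⟩)
    simp only [Prod.fst_neg] at this ⊢
    linarith

lemma IsCup.convexIndep {T : Finset (ℝ × ℝ)} (hT : IsCup T)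
    (hx : Set.InjOn Prod.fst (T : Set (ℝ × ℝ))) : ConvexIndep T := by
  intro p hp hmem
  -- a line through `p` with slope strictly between the slopes of the chords to its left and
  -- to its right has all other points of `T` strictly above it
  obtain ⟨m, hleft, hright⟩ := Order.exists_between_finsets
    ((T.filter (·.1 < p.1)).image (slope · p)) ((T.filter (p.1 < ·.1)).image (slope p)) <| by
      simp only [mem_image, mem_filter]
      rintro _ ⟨a, ⟨ha, hap⟩, rfl⟩ _ ⟨c, ⟨hc, hpc⟩, rfl⟩
      exact (cross_pos_iff_slope_lt_slope hap hpc).1 (hT a ha p hp c hc hap hpc)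
  let f : ℝ × ℝ →ₗ[ℝ] ℝ := LinearMap.snd ℝ ℝ ℝ - m • LinearMap.fst ℝ ℝ ℝ
  have hsep : ↑T \ {p} ⊆ {z | f p < f z} := by
    rintro z ⟨hz, hzp⟩
    simp only [f, Set.mem_ofPred_eq, LinearMap.sub_apply, LinearMap.smul_apply, LinearMap.snd_apply,
      LinearMap.fst_apply, smul_eq_mul]
    rcases lt_or_gt_of_ne fun h ↦ hzp (hx hz hp h) with hzp' | hpz
    · have := hleft (slope z p) (mem_image_of_mem _ (mem_filter.2 ⟨hz, hzp'⟩))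
      rw [slope, div_lt_iff₀ (sub_pos.2 hzp')] at this
      linarith
    · have := hright (slope p z) (mem_image_of_mem _ (mem_filter.2 ⟨hz, hpz⟩))
      rw [slope, lt_div_iff₀ (sub_pos.2 hpz)] at this
      linarith
  exact lt_irrefl (f p) (convexHull_min hsep (convex_halfSpace_gt f.isLinear _) hmem)

lemma IsCap.convexIndep {T : Finset (ℝ × ℝ)} (hT : IsCap T)
    (hx : Set.InjOn Prod.fst (T : Set (ℝ × ℝ))) : ConvexIndep T := by
  refine ConvexIndep.of_image (f := -LinearMap.id) (fun a b h ↦ by simpa using h) ?_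
  simpa [coe_neg, Set.image_neg_eq_neg] using
    (isCup_neg_iff.2 hT).convexIndep (injOn_fst_neg hx)

open Classical in
noncomputable def cupEnds (k : ℕ) (S : Finset (ℝ × ℝ)) : Finset (ℝ × ℝ) :=
  S.filter fun p ↦ ∃ T ⊆ S, IsCup T ∧ T.card = k + 2 ∧ p ∈ T ∧ ∀ z ∈ T, z.1 ≤ p.1

open Classical in
lemma mem_cupEnds {k : ℕ} {S : Finset (ℝ × ℝ)} {p : ℝ × ℝ} :
    p ∈ cupEnds k S ↔ p ∈ S ∧ ∃ T ⊆ S, IsCup T ∧ T.card = k + 2 ∧ p ∈ T ∧ ∀ z ∈ T, z.1 ≤ p.1 := by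
  rw [cupEnds, mem_filter]

lemma card_ne_of_isCup_of_subset_sdiff_cupEnds {k : ℕ} {S T : Finset (ℝ × ℝ)}
    (hTS : T ⊆ S \ cupEnds k S) (hT : IsCup T) : T.card ≠ k + 2 := by
  intro hcard
  obtain ⟨p, hp, hp_max⟩ := T.exists_max_image Prod.fst (card_pos.1 (by omega))
  have hTS' : T ⊆ S := hTS.trans sdiff_subset
  exact (mem_sdiff.1 (hTS hp)).2 (mem_cupEnds.2 ⟨hTS' hp, T, hTS', hT, hcard, hp, hp_max⟩)

lemma exists_cup_or_cap_of_isCap_subset_cupEnds {S C : Finset (ℝ × ℝ)} {k l : ℕ}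
    (hx : Set.InjOn Prod.fst (S : Set (ℝ × ℝ)))
    (hS : NoThreeCollinear (S : Set (ℝ × ℝ)))
    (hCE : C ⊆ cupEnds k S) (hC : IsCap C) (hCcard : C.card = l + 2) :
    (∃ T ⊆ S, IsCup T ∧ T.card = k + 3) ∨ (∃ T ⊆ S, IsCap T ∧ T.card = l + 3) := by
  have hCS : C ⊆ S := fun p hp ↦ (mem_cupEnds.1 (hCE hp)).1
  obtain ⟨p, hpC, hp_min⟩ := C.exists_min_image Prod.fst (card_pos.1 (by omega))
  obtain ⟨r, hrC, hr_min⟩ := (C.erase p).exists_min_image Prod.fst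
    (card_pos.1 (by rw [card_erase_of_mem hpC]; omega))
  obtain ⟨-, T, hTS, hT, hTcard, hpT, hp_max⟩ := mem_cupEnds.1 (hCE hpC)
  obtain ⟨q, hqT, hq_max⟩ := (T.erase p).exists_max_image Prod.fst
    (card_pos.1 (by rw [card_erase_of_mem hpT]; omega))
  have hqT' := mem_of_mem_erase hqT
  have hrC' := mem_of_mem_erase hrC
  have hqp : q.1 < p.1 := (hp_max q hqT').lt_of_ne
    fun h ↦ ne_of_mem_erase hqT (hx (hTS hqT') (hTS hpT) h)
  have hpr : p.1 < r.1 := (hp_min r hrC').lt_of_ne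
    fun h ↦ ne_of_mem_erase hrC (hx (hCS hpC) (hCS hrC') h).symm
  rcases (hS.cross_ne_zero (hTS hqT') (hTS hpT) (hCS hrC') hqp hpr).lt_or_gt with hneg | hpos
  · refine Or.inr ⟨insert q C, insert_subset (hTS hqT') hCS,
      hC.insert_left (hx.mono hCS) hpC hrC' hpr hr_min hqp hneg, ?_⟩
    rw [card_insert_of_notMem fun hqC ↦ (hp_min q hqC).not_gt hqp, hCcard]
  · refine Or.inl ⟨insert r T, insert_subset (hCS hrC') hTS,
      hT.insert_right (hx.mono hTS) hpT hqT' hqp hq_max hpr hpos, ?_⟩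
    rw [card_insert_of_notMem fun hrT ↦ (hp_max r hrT).not_gt hpr, hTcard]

theorem exists_cup_or_cap : ∀ (a b : ℕ) {S : Finset (ℝ × ℝ)},
    Set.InjOn Prod.fst (S : Set (ℝ × ℝ)) → NoThreeCollinear (S : Set (ℝ × ℝ)) →
    (a + b).choose a < S.card →
    (∃ T ⊆ S, IsCup T ∧ T.card = a + 2) ∨ (∃ T ⊆ S, IsCap T ∧ T.card = b + 2)
  | 0, b, S, _, _, hcard => by
    obtain ⟨T, hTS, hT⟩ := exists_subset_card_eq
      (show 2 ≤ S.card by rw [Nat.choose_zero_right] at hcard; omega)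
    exact Or.inl ⟨T, hTS, isCup_of_card_le_two hT.le, hT⟩
  | a + 1, 0, S, _, _, hcard => by
    obtain ⟨T, hTS, hT⟩ := exists_subset_card_eq
      (show 2 ≤ S.card by rw [add_zero, Nat.choose_self] at hcard; omega)
    exact Or.inr ⟨T, hTS, isCap_of_card_le_two hT.le, hT⟩
  | a + 1, b + 1, S, hx, hS, hcard => by
    have hES : cupEnds a S ⊆ S := fun p hp ↦ (mem_cupEnds.1 hp).1
    have hpascal : (a + 1 + (b + 1)).choose (a + 1) =
        (a + (b + 1)).choose a + (a + 1 + b).choose (a + 1) := by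
      rw [show a + 1 + (b + 1) = a + (b + 1) + 1 by ring, Nat.choose_succ_succ,
        show a + (b + 1) = a + 1 + b by ring]
    have hsplit := card_sdiff_add_card_eq_card hES
    by_cases h : (a + (b + 1)).choose a < (S \ cupEnds a S).card
    · rcases exists_cup_or_cap a (b + 1) (hx.mono sdiff_subset) (hS.mono sdiff_subset) h with
        ⟨T, hTS, hT, hTcard⟩ | ⟨T, hTS, hT, hTcard⟩
      · exact absurd hTcard (card_ne_of_isCup_of_subset_sdiff_cupEnds hTS hT)
      · exact Or.inr ⟨T, hTS.trans sdiff_subset, hT, hTcard⟩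
    · rcases exists_cup_or_cap (a + 1) b (hx.mono hES) (hS.mono hES) (by omega) with
        ⟨T, hTE, hT, hTcard⟩ | ⟨C, hCE, hC, hCcard⟩
      · exact Or.inl ⟨T, hTE.trans hES, hT, hTcard⟩
      · exact exists_cup_or_cap_of_isCap_subset_cupEnds hx hS hCE hC hCcard

theorem exists_convexIndep_subset {S : Finset (ℝ × ℝ)} (hx : Set.InjOn Prod.fst (S : Set (ℝ × ℝ)))
    (hS : NoThreeCollinear (S : Set (ℝ × ℝ))) {k : ℕ} (hcard : (k + k).choose k < S.card) :
    ∃ T ⊆ S, T.card = k + 2 ∧ ConvexIndep T := by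
  rcases exists_cup_or_cap k k hx hS hcard with ⟨T, hTS, hT, hTcard⟩ | ⟨T, hTS, hT, hTcard⟩
  exacts [⟨T, hTS, hTcard, hT.convexIndep (hx.mono hTS)⟩,
    ⟨T, hTS, hTcard, hT.convexIndep (hx.mono hTS)⟩]

def shear (t : ℝ) : ℝ × ℝ →ₗ[ℝ] ℝ × ℝ :=
  (LinearMap.fst ℝ ℝ ℝ + t • LinearMap.snd ℝ ℝ ℝ).prod (LinearMap.snd ℝ ℝ ℝ)

@[simp]
lemma shear_apply (t : ℝ) (p : ℝ × ℝ) : shear t p = (p.1 + t * p.2, p.2) := rfl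

lemma shear_injective (t : ℝ) : Function.Injective (shear t) := by
  intro p q h
  rw [shear_apply, shear_apply, Prod.mk.injEq] at h
  obtain ⟨h1, h2⟩ := h
  exact Prod.ext (by rw [h2] at h1; linarith) h2

lemma exists_injOn_fst_image_shear (S : Finset (ℝ × ℝ)) :
    ∃ t, Set.InjOn Prod.fst (S.image (shear t) : Set (ℝ × ℝ)) := by
  -- `shear t` gives `p` and `q` the same abscissa only if `t = (q.1 - p.1) / (p.2 - q.2)`
  obtain ⟨t, ht⟩ := ((S ×ˢ S).image fun pq : (ℝ × ℝ) × (ℝ × ℝ) ↦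
    (pq.2.1 - pq.1.1) / (pq.1.2 - pq.2.2)).exists_notMem
  refine ⟨t, ?_⟩
  rw [coe_image]
  rintro _ ⟨p, hp, rfl⟩ _ ⟨q, hq, rfl⟩ h
  simp only [shear_apply] at h
  obtain h2 | h2 := eq_or_ne p.2 q.2
  · exact congrArg _ (Prod.ext (by rw [h2] at h; linarith) h2)
  · refine absurd (mem_image.2 ⟨(p, q), mem_product.2 ⟨hp, hq⟩, ?_⟩) ht
    field_simp [sub_ne_zero.2 h2]
    linarith

end ErdosSzekeres

open ErdosSzekeres

theorem erdos_szekeres_binomial_bound (n : ℕ) (S : Finset (ℝ × ℝ))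
    (hcard : S.card = Nat.choose (2 * n - 4) (n - 2) + 1)
    (hgen : NoThreeCollinear ↑S) :
    ∃ T : Finset (ℝ × ℝ), T ⊆ S ∧ T.card = n ∧ ConvexIndep ↑T := by
  obtain ⟨t, hx⟩ := exists_injOn_fst_image_shear S
  have hS : NoThreeCollinear ↑(S.image (shear t)) := by
    rw [coe_image]
    exact hgen.image (shear_injective t)
  obtain ⟨T', hT'S, hT'card, hT'⟩ := exists_convexIndep_subset hx hS (k := n - 2) (by
    rw [card_image_of_injective _ (shear_injective t), hcard,
      show n - 2 + (n - 2) = 2 * n - 4 by omega]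
    omega)
  obtain ⟨U', hU'T', hU'card⟩ := exists_subset_card_eq (show n ≤ T'.card by omega)
  obtain ⟨U, hUS, rfl⟩ := subset_image_iff.1 (hU'T'.trans hT'S)
  refine ⟨U, hUS, ?_, ConvexIndep.of_image (shear_injective t) ?_⟩
  · rwa [card_image_of_injective _ (shear_injective t)] at hU'card
  · rw [← coe_image]
    exact hT'.mono (coe_subset.2 hU'T')
end

section
/- Every sequence of C(k+l-4, k-2) + 1 points in the plane in general position contains a k-cup or an l-cap. -/
/-- The 2×2 determinant of two planar vectors. -/
def det2 (u v : ℝ × ℝ) : ℝ := u.1 * v.2 - u.2 * v.1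

/-- The first `k` terms of `c` form a cup: increasing x-coordinates and every
consecutive triple makes a left turn (graph of a convex function). -/
def IsCupSeq (c : ℕ → ℝ × ℝ) (k : ℕ) : Prop :=
  (∀ i j, i < j → j < k → (c i).1 < (c j).1) ∧
  ∀ i, i + 2 < k → 0 < det2 (c (i + 1) - c i) (c (i + 2) - c i)

/-- The first `l` terms of `c` form a cap: increasing x-coordinates and every
consecutive triple makes a right turn (graph of a concave function). -/
def IsCapSeq (c : ℕ → ℝ × ℝ) (l : ℕ) : Prop :=
  (∀ i j, i < j → j < l → (c i).1 < (c j).1) ∧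
  ∀ i, i + 2 < l → det2 (c (i + 1) - c i) (c (i + 2) - c i) < 0

/-!
Erdős–Szekeres induction on `k + l`, for an arbitrary finite set `S` of indices. Split `S` into
the set `E` of points that end some `(k-1)`-cup and its complement. A `(k-1)`-cup inside `S \ E`
would end in `E`, so if `S \ E` is large it contains an `l`-cap. Otherwise, by Pascal's rule, `E`
is large and contains a `k`-cup or an `(l-1)`-cap. The first point of such a cap ends a
`(k-1)`-cup, and the turn made there by the last point of the cup, this point and the next point
of the cap either extends the cup to a `k`-cup or the cap to an `l`-cap.
-/

open Finset

namespace CupsCaps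

def IsChainIn (S : Finset ℕ) (n : ℕ) (s : ℕ → ℕ) : Prop :=
  (∀ i, i < n → s i ∈ S) ∧ ∀ i j, i < j → j < n → s i < s j

def IsCupIn (P : ℕ → ℝ × ℝ) (S : Finset ℕ) (k : ℕ) (s : ℕ → ℕ) : Prop :=
  IsChainIn S k s ∧ IsCupSeq (fun i => P (s i)) k

def IsCapIn (P : ℕ → ℝ × ℝ) (S : Finset ℕ) (l : ℕ) (s : ℕ → ℕ) : Prop :=
  IsChainIn S l s ∧ IsCapSeq (fun i => P (s i)) l

def InGeneralPosition (P : ℕ → ℝ × ℝ) (S : Finset ℕ) : Prop :=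
  ∀ i ∈ S, ∀ j ∈ S, ∀ m ∈ S, i < j → j < m → det2 (P j - P i) (P m - P i) ≠ 0

variable {P : ℕ → ℝ × ℝ} {S T : Finset ℕ} {k l n p q : ℕ} {s t : ℕ → ℕ}

lemma InGeneralPosition.mono (h : InGeneralPosition P T) (hST : S ⊆ T) :
    InGeneralPosition P S :=
  fun i hi j hj m hm => h i (hST hi) j (hST hj) m (hST hm)

namespace IsChainIn

lemma mono (h : IsChainIn S n s) (hST : S ⊆ T) : IsChainIn T n s :=
  ⟨fun i hi => hST (h.1 i hi), h.2⟩

lemma fst_lt (hP : StrictMonoOn (fun i => (P i).1) S) (h : IsChainIn S n s) :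
    ∀ i j, i < j → j < n → (P (s i)).1 < (P (s j)).1 :=
  fun i j hij hj => hP (h.1 i (hij.trans hj)) (h.1 j hj) (h.2 i j hij hj)

lemma le (h : IsChainIn S n s) {i j : ℕ} (hij : i ≤ j) (hj : j < n) : s i ≤ s j := by
  rcases hij.lt_or_eq with hij | rfl
  exacts [(h.2 i j hij hj).le, le_rfl]

lemma update (h : IsChainIn S (n + 1) s) (hq : q ∈ S) (hlt : s n < q) :
    IsChainIn S (n + 2) (Function.update s (n + 1) q) := by
  constructor
  · intro i hi
    rcases (show i < n + 1 ∨ i = n + 1 by omega) with hi | rfl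
    · simpa [Function.update_of_ne hi.ne] using h.1 i hi
    · simpa using hq
  · intro i j hij hj
    rw [Function.update_of_ne (show i ≠ n + 1 by omega)]
    rcases (show j < n + 1 ∨ j = n + 1 by omega) with hj | rfl
    · simpa [Function.update_of_ne hj.ne] using h.2 i j hij hj
    · rw [Function.update_self]
      exact (h.le (Nat.le_of_lt_succ hij) (by omega)).trans_lt hlt

lemma cons (h : IsChainIn S n t) (hp : p ∈ S) (hlt : p < t 0) :
    IsChainIn S (n + 1) (fun | 0 => p | i + 1 => t i) := by
  constructor
  · rintro (_ | i) hi
    exacts [hp, h.1 i (by omega)]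
  · rintro (_ | i) (_ | j) hij hj
    · omega
    · exact hlt.trans_le (h.le j.zero_le (by omega))
    · omega
    · exact h.2 i j (by omega) (by omega)

end IsChainIn

lemma exists_isChainIn_of_le_card (h : n ≤ #S) : ∃ s, IsChainIn S n s := by
  refine ⟨fun i => if hi : i < #S then S.orderEmbOfFin rfl ⟨i, hi⟩ else 0, ?_, ?_⟩
  · intro i hi
    simp [show i < #S by omega]
  · intro i j hij hj
    simpa [show i < #S by omega, show j < #S by omega] using hij

lemma IsCupIn.mono (h : IsCupIn P S k s) (hST : S ⊆ T) : IsCupIn P T k s :=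
  ⟨h.1.mono hST, h.2⟩

lemma IsCapIn.mono (h : IsCapIn P S l s) (hST : S ⊆ T) : IsCapIn P T l s :=
  ⟨h.1.mono hST, h.2⟩

lemma exists_isCupIn_of_le_two (hP : StrictMonoOn (fun i => (P i).1) S) (hk : k ≤ 2)
    (hS : k ≤ #S) : ∃ s, IsCupIn P S k s := by
  obtain ⟨s, hs⟩ := exists_isChainIn_of_le_card hS
  exact ⟨s, hs, hs.fst_lt hP, fun i hi => by omega⟩

lemma exists_isCapIn_of_le_two (hP : StrictMonoOn (fun i => (P i).1) S) (hl : l ≤ 2)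
    (hS : l ≤ #S) : ∃ s, IsCapIn P S l s := by
  obtain ⟨s, hs⟩ := exists_isChainIn_of_le_card hS
  exact ⟨s, hs, hs.fst_lt hP, fun i hi => by omega⟩

lemma IsCupIn.snoc (hP : StrictMonoOn (fun i => (P i).1) S) (h : IsCupIn P S (k + 2) s)
    (hq : q ∈ S) (hlt : s (k + 1) < q)
    (hturn : 0 < det2 (P (s (k + 1)) - P (s k)) (P q - P (s k))) :
    IsCupIn P S (k + 3) (Function.update s (k + 2) q) := by
  have hchain := h.1.update hq hlt
  refine ⟨hchain, hchain.fst_lt hP, fun i hi => ?_⟩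
  rcases (show i < k ∨ i = k by omega) with hik | rfl
  · simpa [Function.update_of_ne (show i ≠ k + 2 by omega),
      Function.update_of_ne (show i + 1 ≠ k + 2 by omega),
      Function.update_of_ne (show i + 2 ≠ k + 2 by omega)] using h.2.2 i (by omega)
  · simpa [Function.update_of_ne (show i ≠ i + 2 by omega)] using hturn

lemma IsCapIn.cons (hP : StrictMonoOn (fun i => (P i).1) S) (h : IsCapIn P S (l + 2) t)
    (hp : p ∈ S) (hlt : p < t 0) (hturn : det2 (P (t 0) - P p) (P (t 1) - P p) < 0) :
    IsCapIn P S (l + 3) (fun | 0 => p | i + 1 => t i) := by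
  have hchain := h.1.cons hp hlt
  refine ⟨hchain, hchain.fst_lt hP, ?_⟩
  rintro (_ | i) hi
  exacts [hturn, h.2.2 i (by omega)]

lemma exists_cup_or_cap_of_cup_last_eq_cap_head (hP : StrictMonoOn (fun i => (P i).1) S)
    (hgen : InGeneralPosition P S) (hs : IsCupIn P S (k + 2) s) (ht : IsCapIn P S (l + 2) t)
    (hst : s (k + 1) = t 0) :
    (∃ u, IsCupIn P S (k + 3) u) ∨ ∃ u, IsCapIn P S (l + 3) u := by
  have hsk : s k ∈ S := hs.1.1 k (by omega)
  have ht1 : t 1 ∈ S := ht.1.1 1 (by omega)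
  have hlt₁ : s k < t 0 := hst ▸ hs.1.2 k (k + 1) (by omega) (by omega)
  have hlt₂ : t 0 < t 1 := ht.1.2 0 1 one_pos (by omega)
  rcases (hgen _ hsk _ (ht.1.1 0 (by omega)) _ ht1 hlt₁ hlt₂).lt_or_gt with hright | hleft
  · exact Or.inr ⟨_, ht.cons hP hsk hlt₁ hright⟩
  · exact Or.inl ⟨_, hs.snoc hP ht1 (hst ▸ hlt₂) (hst ▸ hleft)⟩

lemma exists_cup_or_cap_step {a b : ℕ} (hP : StrictMonoOn (fun i => (P i).1) S)
    (hgen : InGeneralPosition P S)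
    (ihF : ∀ T ⊆ S, (a + b + 1).choose a < #T →
      (∃ s, IsCupIn P T (a + 2) s) ∨ ∃ s, IsCapIn P T (b + 3) s)
    (ihE : ∀ T ⊆ S, (a + b + 1).choose (a + 1) < #T →
      (∃ s, IsCupIn P T (a + 3) s) ∨ ∃ s, IsCapIn P T (b + 2) s)
    (hS : (a + b + 2).choose (a + 1) < #S) :
    (∃ s, IsCupIn P S (a + 3) s) ∨ ∃ s, IsCapIn P S (b + 3) s := by
  classical
  set E := S.filter fun p => ∃ s, IsCupIn P S (a + 2) s ∧ s (a + 1) = p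
  have hE : E ⊆ S := filter_subset _ _
  have hF : S \ E ⊆ S := sdiff_subset
  by_cases hFcard : (a + b + 1).choose a < #(S \ E)
  · rcases ihF _ hF hFcard with ⟨s, hs⟩ | ⟨t, ht⟩
    · have hlast : s (a + 1) ∈ S \ E := hs.1.1 (a + 1) (by omega)
      exact absurd (mem_filter.2 ⟨hF hlast, s, hs.mono hF, rfl⟩) (mem_sdiff.1 hlast).2
    · exact Or.inr ⟨t, ht.mono hF⟩
  · have hEcard : (a + b + 1).choose (a + 1) < #E := by
      have := card_sdiff_add_card_eq_card hE
      rw [Nat.choose_succ_succ'] at hS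
      omega
    rcases ihE E hE hEcard with ⟨s, hs⟩ | ⟨t, ht⟩
    · exact Or.inl ⟨s, hs.mono hE⟩
    · obtain ⟨-, s, hs, hst⟩ := mem_filter.1 (ht.1.1 0 (by omega))
      exact exists_cup_or_cap_of_cup_last_eq_cap_head hP hgen hs (ht.mono hE) hst

theorem exists_cup_or_cap (k l : ℕ) (S : Finset ℕ) (hP : StrictMonoOn (fun i => (P i).1) S)
    (hgen : InGeneralPosition P S) (hS : (k + l - 4).choose (k - 2) < #S) :
    (∃ s, IsCupIn P S k s) ∨ ∃ s, IsCapIn P S l s := by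
  by_cases hk : k ≤ 2
  · rw [show k - 2 = 0 by omega, Nat.choose_zero_right] at hS
    exact Or.inl (exists_isCupIn_of_le_two hP hk (by omega))
  by_cases hl : l ≤ 2
  · refine Or.inr (exists_isCapIn_of_le_two hP hl ?_)
    obtain hl | rfl : l ≤ 1 ∨ l = 2 := by omega
    · omega
    · rw [show k + 2 - 4 = k - 2 by omega, Nat.choose_self] at hS
      exact hS
  obtain ⟨a, rfl⟩ : ∃ a, k = a + 3 := ⟨k - 3, by omega⟩
  obtain ⟨b, rfl⟩ : ∃ b, l = b + 3 := ⟨l - 3, by omega⟩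
  refine exists_cup_or_cap_step hP hgen (fun T hT hTcard => ?_) (fun T hT hTcard => ?_) ?_
  · refine exists_cup_or_cap (a + 2) (b + 3) T (hP.mono (coe_subset.2 hT)) (hgen.mono hT) ?_
    rwa [show a + 2 + (b + 3) - 4 = a + b + 1 by omega]
  · refine exists_cup_or_cap (a + 3) (b + 2) T (hP.mono (coe_subset.2 hT)) (hgen.mono hT) ?_
    rwa [show a + 3 + (b + 2) - 4 = a + b + 1 by omega]
  · rwa [show a + 3 + (b + 3) - 4 = a + b + 2 by omega] at hS
termination_by k + l

end CupsCaps

open CupsCaps in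
theorem cups_caps (k l : ℕ) (P : ℕ → ℝ × ℝ)
    (N : ℕ) (hN : N = Nat.choose (k + l - 4) (k - 2) + 1)
    (hx : ∀ i j, i < j → j < N → (P i).1 < (P j).1)
    (hgen : ∀ i j m, i < j → j < m → m < N →
      det2 (P j - P i) (P m - P i) ≠ 0) :
    (∃ s : ℕ → ℕ, (∀ i, i < k → s i < N) ∧ (∀ i j, i < j → j < k → s i < s j) ∧
      IsCupSeq (fun i => P (s i)) k) ∨
    (∃ s : ℕ → ℕ, (∀ i, i < l → s i < N) ∧ (∀ i j, i < j → j < l → s i < s j) ∧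
      IsCapSeq (fun i => P (s i)) l) := by
  have hP : StrictMonoOn (fun i => (P i).1) (range N : Set ℕ) := by
    rw [coe_range]
    exact fun i _ j hj hij => hx i j hij hj
  have hgen' : InGeneralPosition P (range N) := fun i _ j _ m hm hij hjm =>
    hgen i j m hij hjm (mem_range.1 hm)
  rcases exists_cup_or_cap k l (range N) hP hgen' (by simp [hN]) with
    ⟨s, ⟨hs, hmono⟩, hcup⟩ | ⟨s, ⟨hs, hmono⟩, hcap⟩
  · exact Or.inl ⟨s, fun i hi => mem_range.1 (hs i hi), hmono, hcup⟩
  · exact Or.inr ⟨s, fun i hi => mem_range.1 (hs i hi), hmono, hcap⟩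
end

section
/- If f : ℝ → ℝ is a smooth 2π-periodic function with f(t) + f''(t) > 0 for all t, then f is the support function of a compact convex body in ℝ², namely the body bounded by the curve γ(t) = (f(t)cos t − f'(t)sin t, f(t)sin t + f'(t)cos t). -/
open Real Set

lemma key_half (f : ℝ → ℝ) (hsmooth : ContDiff ℝ (⊤ : ℕ∞) f)
    (hcurv : ∀ t, 0 < f t + deriv (deriv f) t) (t : ℝ) (s : ℝ)
    (hs : s ∈ Set.Icc 0 π) :
    f t * Real.cos s + deriv f t * Real.sin s ≤ f (t + s) := by
  have hd1 : Differentiable ℝ f := hsmooth.differentiable (by simp)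
  have hsm0 : ContDiff ℝ (⊤ : ℕ∞) f := hsmooth.of_le (by simp)
  have hsm1 : ContDiff ℝ (⊤ : ℕ∞) (deriv f) := (contDiff_infty_iff_deriv.mp hsm0).2
  have hd2 : Differentiable ℝ (deriv f) := hsm1.differentiable (by simp)
  set A := f t with hA
  set B := deriv f t with hB
  set G : ℝ → ℝ := fun s => f (t + s) - A * Real.cos s - B * Real.sin s with hG
  set G1 : ℝ → ℝ := fun s => deriv f (t + s) + A * Real.sin s - B * Real.cos s with hG1
  set G2 : ℝ → ℝ := fun s => deriv (deriv f) (t + s) + A * Real.cos s + B * Real.sin s with hG2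
  set W : ℝ → ℝ := fun s => G1 s * Real.sin s - G s * Real.cos s with hW
  have hshift : ∀ (g : ℝ → ℝ), Differentiable ℝ g → ∀ x : ℝ,
      HasDerivAt (fun s => g (t + s)) (deriv g (t + x)) x := by
    intro g hg x
    simpa [Function.comp_def] using ((hg (t + x)).hasDerivAt).comp x ((hasDerivAt_id x).const_add t)
  have hGd : ∀ x, HasDerivAt G (G1 x) x := by
    intro x
    have h1 := hshift f hd1 x
    have := (h1.sub ((Real.hasDerivAt_cos x).const_mul A)).sub
      ((Real.hasDerivAt_sin x).const_mul B)
    refine this.congr_deriv ?_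
    simp only [hG1]; ring
  have hG1d : ∀ x, HasDerivAt G1 (G2 x) x := by
    intro x
    have h1 := hshift (deriv f) hd2 x
    have := (h1.add ((Real.hasDerivAt_sin x).const_mul A)).sub
      ((Real.hasDerivAt_cos x).const_mul B)
    refine this.congr_deriv ?_
    simp only [hG2]; ring
  have hWd : ∀ x, HasDerivAt W ((G x + G2 x) * Real.sin x) x := by
    intro x
    have := ((hG1d x).mul (Real.hasDerivAt_sin x)).sub
      ((hGd x).mul (Real.hasDerivAt_cos x))
    refine this.congr_deriv ?_
    simp only [hG1, hG2, hG]; ring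
  have hGG2 : ∀ x, G x + G2 x = f (t + x) + deriv (deriv f) (t + x) := by
    intro x; simp only [hG, hG2]; ring
  have hG0 : G 0 = 0 := by simp [hG, hA]
  have hG10 : G1 0 = 0 := by simp [hG1, hB]
  have hW0 : W 0 = 0 := by simp [hW, hG0]
  -- W is monotone on [0, π]
  have hWmono : MonotoneOn W (Icc 0 π) := by
    apply monotoneOn_of_deriv_nonneg (convex_Icc 0 π)
    · exact fun x _ => ((hWd x).continuousAt).continuousWithinAt
    · intro x hx; exact ((hWd x).differentiableAt).differentiableWithinAt
    · intro x hx
      rw [interior_Icc] at hx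
      rw [(hWd x).deriv, hGG2]
      exact mul_nonneg (hcurv _).le (Real.sin_pos_of_pos_of_lt_pi hx.1 hx.2).le
  have hWnn : ∀ x ∈ Icc 0 π, 0 ≤ W x := by
    intro x hx
    have := hWmono (left_mem_Icc.mpr Real.pi_pos.le) hx hx.1
    rwa [hW0] at this
  -- Q = G / sin is monotone on (0, π)
  set Q : ℝ → ℝ := fun s => G s / Real.sin s with hQ
  have hQd : ∀ x ∈ Ioo 0 π, HasDerivAt Q (W x / Real.sin x ^ 2) x := by
    intro x hx
    have hsx : Real.sin x ≠ 0 := (Real.sin_pos_of_pos_of_lt_pi hx.1 hx.2).ne'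
    have := (hGd x).div (Real.hasDerivAt_sin x) hsx
    exact this
  have hQmono : MonotoneOn Q (Ioo 0 π) := by
    apply monotoneOn_of_deriv_nonneg (convex_Ioo 0 π)
    · exact fun x hx => ((hQd x hx).continuousAt).continuousWithinAt
    · intro x hx; rw [interior_Ioo] at hx
      exact ((hQd x hx).differentiableAt).differentiableWithinAt
    · intro x hx; rw [interior_Ioo] at hx
      rw [(hQd x hx).deriv]
      exact div_nonneg (hWnn x ⟨hx.1.le, hx.2.le⟩) (sq_nonneg _)
  -- tendsto Q → 0 at 0⁺
  have hQtendsto : Filter.Tendsto Q (nhdsWithin 0 (Ioi 0)) (nhds 0) := by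
    have h1 : Filter.Tendsto (fun x => G x / x) (nhdsWithin 0 (Ioi 0)) (nhds 0) := by
      have := (hasDerivAt_iff_tendsto_slope.mp (hGd 0))
      rw [hG10] at this
      have h2 := this.mono_left (nhdsWithin_mono 0 (by intro x hx; exact ne_of_gt hx))
      refine h2.congr' ?_
      filter_upwards [self_mem_nhdsWithin] with x hx
      simp [slope, hG0, div_eq_inv_mul]
    have h2 : Filter.Tendsto (fun x : ℝ => x / Real.sin x) (nhdsWithin 0 (Ioi 0)) (nhds 1) := by
      have hsin : Filter.Tendsto (fun x : ℝ => Real.sin x / x) (nhdsWithin 0 (Ioi 0)) (nhds 1) := by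
        have := (hasDerivAt_iff_tendsto_slope.mp (Real.hasDerivAt_sin 0))
        rw [Real.cos_zero] at this
        have h2 := this.mono_left (nhdsWithin_mono 0 (by intro x hx; exact ne_of_gt hx))
        refine h2.congr' ?_
        filter_upwards [self_mem_nhdsWithin] with x hx
        simp [slope, div_eq_inv_mul]
      have := hsin.inv₀ one_ne_zero
      simpa [inv_div] using this
    have := h1.mul h2
    rw [zero_mul] at this
    refine this.congr' ?_
    filter_upwards [self_mem_nhdsWithin] with x hx
    rw [div_mul_div_comm, mul_comm (G x) x, mul_div_mul_left _ _ (ne_of_gt hx)]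
  -- conclude G ≥ 0 on Ioo
  have hGnnIoo : ∀ x ∈ Ioo 0 π, 0 ≤ G x := by
    intro x hx
    have hQx : 0 ≤ Q x := by
      refine le_of_tendsto hQtendsto ?_
      filter_upwards [Ioo_mem_nhdsGT_of_mem (by constructor <;> [rfl; exact hx.1] :
        (0:ℝ) ∈ Ico 0 x)] with y hy
      exact hQmono ⟨hy.1, hy.2.trans hx.2⟩ hx hy.2.le
    have hsx : 0 < Real.sin x := Real.sin_pos_of_pos_of_lt_pi hx.1 hx.2
    have := mul_nonneg hQx hsx.le
    rwa [hQ, div_mul_cancel₀ _ hsx.ne'] at this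
  -- conclude G ≥ 0 on Icc
  have hGnn : 0 ≤ G s := by
    rcases eq_or_lt_of_le hs.1 with h0 | h0
    · rw [← h0]; simp [hG0]
    rcases eq_or_lt_of_le hs.2 with hpi | hpi
    · -- s = π : continuity
      have hc : Filter.Tendsto G (nhdsWithin π (Iio π)) (nhds (G π)) :=
        ((hGd π).continuousAt).continuousWithinAt
      rw [hpi]
      refine ge_of_tendsto hc ?_
      filter_upwards [Ioo_mem_nhdsLT_of_mem (by simp [Real.pi_pos] : π ∈ Ioc (0:ℝ) π)]
        with y hy using hGnnIoo y hy
    · exact hGnnIoo s ⟨h0, hpi⟩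
  have : 0 ≤ f (t + s) - A * Real.cos s - B * Real.sin s := hGnn
  linarith

lemma key_full (f : ℝ → ℝ) (hsmooth : ContDiff ℝ (⊤ : ℕ∞) f)
    (hper : Function.Periodic f (2 * Real.pi))
    (hcurv : ∀ t, 0 < f t + deriv (deriv f) t) (t s : ℝ) :
    f t * Real.cos s + deriv f t * Real.sin s ≤ f (t + s) := by
  set f₂ : ℝ → ℝ := fun x => f (-x) with hf₂
  have h2smooth : ContDiff ℝ (⊤ : ℕ∞) f₂ := hsmooth.comp contDiff_neg
  have hderiv2 : deriv f₂ = fun x => -deriv f (-x) := funext fun x => deriv_comp_neg f x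
  have hderiv22 : deriv (deriv f₂) = fun x => deriv (deriv f) (-x) := by
    rw [hderiv2]
    funext x
    rw [show (fun x => -deriv f (-x)) = (fun x => -(fun y => deriv f (-y)) x) from rfl]
    rw [deriv.fun_neg, deriv_comp_neg (deriv f) x, neg_neg]
  have h2curv : ∀ x, 0 < f₂ x + deriv (deriv f₂) x := by
    intro x; rw [hderiv22]; exact hcurv (-x)
  -- negative half
  have hneg : ∀ s ∈ Set.Icc (-π) 0,
      f t * Real.cos s + deriv f t * Real.sin s ≤ f (t + s) := by
    intro s hs
    have h := key_half f₂ h2smooth h2curv (-t) (-s) ⟨by linarith [hs.2], by linarith [hs.1]⟩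
    rw [hderiv2] at h
    simp only [hf₂, neg_neg, Real.cos_neg, Real.sin_neg] at h
    calc f t * Real.cos s + deriv f t * Real.sin s
        = f t * Real.cos s + -deriv f t * -Real.sin s := by ring
      _ ≤ f (-(-t + -s)) := h
      _ = f (t + s) := by ring_nf
  have hpos : ∀ s ∈ Set.Icc 0 π,
      f t * Real.cos s + deriv f t * Real.sin s ≤ f (t + s) :=
    fun s hs => key_half f hsmooth hcurv t s hs
  -- reduce to [-π, π) by periodicity
  set G : ℝ → ℝ := fun s => f (t + s) - f t * Real.cos s - deriv f t * Real.sin s with hG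
  have hGper : Function.Periodic G (2 * Real.pi) := by
    intro x
    simp only [hG, ← add_assoc]
    rw [hper (t + x), Real.cos_add_two_pi, Real.sin_add_two_pi]
  obtain ⟨y, hy, hGy⟩ := hGper.exists_mem_Ico Real.two_pi_pos s (-π)
  have hy' : y ∈ Set.Ico (-π) π := by
    exact ⟨hy.1, by linarith [hy.2]⟩
  have h0 : 0 ≤ G y := by
    rcases le_or_gt y 0 with h | h
    · have := hneg y ⟨hy'.1, h⟩; simp only [hG]; linarith
    · have := hpos y ⟨h.le, hy'.2.le⟩; simp only [hG]; linarith
  have : 0 ≤ G s := by rw [hGy]; exact h0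
  simp only [hG] at this; linarith

lemma lin_bound (θ d1 d2 : ℝ) : Real.cos θ * d1 + Real.sin θ * d2 ≤ |d1| + |d2| := by
  have h1 : Real.cos θ * d1 ≤ |d1| := by
    calc Real.cos θ * d1 ≤ |Real.cos θ * d1| := le_abs_self _
      _ = |Real.cos θ| * |d1| := abs_mul _ _
      _ ≤ 1 * |d1| := by
          exact mul_le_mul_of_nonneg_right (Real.abs_cos_le_one θ) (abs_nonneg _)
      _ = |d1| := one_mul _
  have h2 : Real.sin θ * d2 ≤ |d2| := by
    calc Real.sin θ * d2 ≤ |Real.sin θ * d2| := le_abs_self _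
      _ = |Real.sin θ| * |d2| := abs_mul _ _
      _ ≤ 1 * |d2| := by
          exact mul_le_mul_of_nonneg_right (Real.abs_sin_le_one θ) (abs_nonneg _)
      _ = |d2| := one_mul _
  linarith

/-- The support function of a planar set, in the direction of angle `θ`. -/
noncomputable def suppFn2 (K : Set (ℝ × ℝ)) (θ : ℝ) : ℝ :=
  sSup ((fun x => Real.cos θ * x.1 + Real.sin θ * x.2) '' K)

theorem blaschke_support_function (f : ℝ → ℝ)
    (hsmooth : ContDiff ℝ (⊤ : ℕ∞) f)
    (hper : Function.Periodic f (2 * Real.pi))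
    (hcurv : ∀ t, 0 < f t + deriv (deriv f) t) :
    ∃ K : Set (ℝ × ℝ), IsCompact K ∧ Convex ℝ K ∧ K.Nonempty ∧
      (∀ θ : ℝ, suppFn2 K θ = f θ) ∧
      frontier K = Set.range (fun t : ℝ =>
        (f t * Real.cos t - deriv f t * Real.sin t,
         f t * Real.sin t + deriv f t * Real.cos t)) := by
  have hd1 : Differentiable ℝ f := hsmooth.differentiable (by simp)
  set γ : ℝ → ℝ × ℝ := fun t =>
    (f t * Real.cos t - deriv f t * Real.sin t,
     f t * Real.sin t + deriv f t * Real.cos t) with hγ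
  set K : Set (ℝ × ℝ) := {x | ∀ θ : ℝ, Real.cos θ * x.1 + Real.sin θ * x.2 ≤ f θ} with hK
  have hγK : ∀ t, γ t ∈ K := by
    intro t θ
    have h := key_full f hsmooth hper hcurv t (θ - t)
    rw [add_sub_cancel, Real.cos_sub, Real.sin_sub] at h
    simp only [hγ]
    calc Real.cos θ * (f t * Real.cos t - deriv f t * Real.sin t) +
          Real.sin θ * (f t * Real.sin t + deriv f t * Real.cos t)
        = f t * (Real.cos θ * Real.cos t + Real.sin θ * Real.sin t) +
          deriv f t * (Real.sin θ * Real.cos t - Real.cos θ * Real.sin t) := by ring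
      _ ≤ f θ := h
  have hγval : ∀ t, Real.cos t * (γ t).1 + Real.sin t * (γ t).2 = f t := by
    intro t
    simp only [hγ]
    linear_combination f t * (Real.sin_sq_add_cos_sq t)
  have hKclosed : IsClosed K := by
    have : K = ⋂ θ : ℝ, {x : ℝ × ℝ | Real.cos θ * x.1 + Real.sin θ * x.2 ≤ f θ} := by
      ext x; simp [hK, Set.mem_iInter]
    rw [this]
    exact isClosed_iInter fun θ => isClosed_le
      (((continuous_const.mul continuous_fst).add (continuous_const.mul continuous_snd)))
      continuous_const
  -- boundedness / compactness
  set R : ℝ := max (max (f 0) (f π)) (max (f (π/2)) (f (-(π/2)))) with hR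
  have hKsub : K ⊆ Metric.closedBall 0 R := by
    intro x hx
    have h0 := hx 0
    have hπ := hx π
    have hh := hx (π/2)
    have hh' := hx (-(π/2))
    simp [Real.cos_pi, Real.sin_pi, Real.cos_pi_div_two, Real.sin_pi_div_two] at h0 hπ hh hh'
    rw [Metric.mem_closedBall, dist_zero_right, Prod.norm_def]
    apply max_le
    · rw [Real.norm_eq_abs, abs_le]
      constructor
      · have : f π ≤ R := le_trans (le_max_right _ _) (le_max_left _ _)
        linarith
      · exact le_trans h0 (le_trans (le_max_left _ _) (le_max_left _ _))
    · rw [Real.norm_eq_abs, abs_le]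
      constructor
      · have : f (-(π/2)) ≤ R := le_trans (le_max_right _ _) (le_max_right _ _)
        linarith
      · exact le_trans hh (le_trans (le_max_left _ _) (le_max_right _ _))
  have hKcompact : IsCompact K :=
    (isCompact_closedBall (0 : ℝ × ℝ) R).of_isClosed_subset hKclosed hKsub
  have hKconv : Convex ℝ K := by
    intro x hx y hy a b ha hb hab
    intro θ
    have h1 := hx θ
    have h2 := hy θ
    simp only [Prod.fst_add, Prod.snd_add, Prod.smul_fst, Prod.smul_snd, smul_eq_mul]
    calc Real.cos θ * (a * x.1 + b * y.1) + Real.sin θ * (a * x.2 + b * y.2)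
        = a * (Real.cos θ * x.1 + Real.sin θ * x.2) +
          b * (Real.cos θ * y.1 + Real.sin θ * y.2) := by ring
      _ ≤ a * f θ + b * f θ := add_le_add
          (mul_le_mul_of_nonneg_left h1 ha) (mul_le_mul_of_nonneg_left h2 hb)
      _ = f θ := by rw [← add_mul, hab, one_mul]
  have hKne : K.Nonempty := ⟨γ 0, hγK 0⟩
  have hsupp : ∀ θ : ℝ, suppFn2 K θ = f θ := by
    intro θ
    apply IsGreatest.csSup_eq
    constructor
    · exact ⟨γ θ, hγK θ, hγval θ⟩
    · rintro v ⟨x, hx, rfl⟩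
      exact hx θ
  -- interior criterion
  have hKint : ∀ x : ℝ × ℝ, (∀ θ, Real.cos θ * x.1 + Real.sin θ * x.2 < f θ) →
      x ∈ interior K := by
    intro x hx
    set h : ℝ → ℝ := fun θ => f θ - (Real.cos θ * x.1 + Real.sin θ * x.2) with hh
    have hhper : Function.Periodic h (2 * Real.pi) := by
      intro φ
      simp only [hh]
      rw [hper φ, Real.cos_add_two_pi, Real.sin_add_two_pi]
    have hhcont : Continuous h := by
      apply (hsmooth.continuous).sub
      exact (continuous_cos.mul continuous_const).add (continuous_sin.mul continuous_const)
    obtain ⟨θ₀, hθ₀mem, hθ₀⟩ := (isCompact_Icc (a := (0:ℝ)) (b := 2*π)).exists_isMinOn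
      (Set.nonempty_Icc.mpr (by positivity)) hhcont.continuousOn
    set ε := h θ₀ with hε
    have hεpos : 0 < ε := by
      have := hx θ₀; simp only [hh, hε]; linarith
    have hlb : ∀ θ, ε ≤ h θ := by
      intro θ
      obtain ⟨θ', hθ', heq⟩ := hhper.exists_mem_Ico₀ Real.two_pi_pos θ
      rw [heq]
      exact hθ₀ ⟨hθ'.1, hθ'.2.le⟩
    clear_value ε
    rw [mem_interior]
    refine ⟨Metric.ball x (ε/2), ?_, Metric.isOpen_ball, Metric.mem_ball_self (half_pos hεpos)⟩
    intro y hy θ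
    show Real.cos θ * y.1 + Real.sin θ * y.2 ≤ f θ
    have hd : ‖y - x‖ < ε/2 := by rwa [← dist_eq_norm, ← Metric.mem_ball]
    have hd1' : |y.1 - x.1| < ε/2 := by
      have h := (norm_fst_le (y - x)).trans_lt hd
      rwa [Prod.fst_sub, Real.norm_eq_abs] at h
    have hd2' : |y.2 - x.2| < ε/2 := by
      have h := (norm_snd_le (y - x)).trans_lt hd
      rwa [Prod.snd_sub, Real.norm_eq_abs] at h
    have hb := lin_bound θ (y.1 - x.1) (y.2 - x.2)
    have hl := hlb θ
    simp only [hh] at hl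
    have key : Real.cos θ * y.1 + Real.sin θ * y.2 =
        (Real.cos θ * x.1 + Real.sin θ * x.2) +
        (Real.cos θ * (y.1 - x.1) + Real.sin θ * (y.2 - x.2)) := by ring
    rw [key]
    by_contra hcon
    push_neg at hcon
    linarith only [hb, hd1', hd2', hl, hcon]
  -- boundary points lie on the curve
  have hbd : ∀ x ∈ K, ∀ θ : ℝ, Real.cos θ * x.1 + Real.sin θ * x.2 = f θ → x = γ θ := by
    intro x hx θ heq
    set h : ℝ → ℝ := fun φ => f φ - (Real.cos φ * x.1 + Real.sin φ * x.2) with hh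
    have hhd : ∀ φ, HasDerivAt h (deriv f φ + Real.sin φ * x.1 - Real.cos φ * x.2) φ := by
      intro φ
      have := ((hd1 φ).hasDerivAt).sub
        (((Real.hasDerivAt_cos φ).mul_const x.1).add ((Real.hasDerivAt_sin φ).mul_const x.2))
      refine this.congr_deriv ?_
      ring
    have hθ0 : h θ = 0 := by simp only [hh]; linarith
    have hmin : IsLocalMin h θ := by
      apply Filter.Eventually.of_forall
      intro φ
      have := hx φ
      simp only [hh, hθ0]
      linarith
    have hder0 := hmin.deriv_eq_zero
    rw [(hhd θ).deriv] at hder0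
    have e2 : -Real.sin θ * x.1 + Real.cos θ * x.2 = deriv f θ := by linarith
    have hx1 : x.1 = f θ * Real.cos θ - deriv f θ * Real.sin θ := by
      linear_combination Real.cos θ * heq - Real.sin θ * e2 - x.1 * Real.sin_sq_add_cos_sq θ
    have hx2 : x.2 = f θ * Real.sin θ + deriv f θ * Real.cos θ := by
      linear_combination Real.sin θ * heq + Real.cos θ * e2 - x.2 * Real.sin_sq_add_cos_sq θ
    have : γ θ = (f θ * Real.cos θ - deriv f θ * Real.sin θ,
        f θ * Real.sin θ + deriv f θ * Real.cos θ) := rfl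
    rw [this, Prod.ext_iff]
    exact ⟨hx1, hx2⟩
  -- frontier equality
  have hfr : frontier K = Set.range γ := by
    rw [hKclosed.frontier_eq]
    apply Set.Subset.antisymm
    · rintro x ⟨hxK, hxint⟩
      by_cases hall : ∀ θ, Real.cos θ * x.1 + Real.sin θ * x.2 < f θ
      · exact absurd (hKint x hall) hxint
      · push_neg at hall
        obtain ⟨θ, hθ⟩ := hall
        have heq : Real.cos θ * x.1 + Real.sin θ * x.2 = f θ := le_antisymm (hxK θ) hθ
        exact ⟨θ, (hbd x hxK θ heq).symm⟩
    · rintro _ ⟨t, rfl⟩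
      refine ⟨hγK t, ?_⟩
      intro hint
      rw [mem_interior_iff_mem_nhds, Metric.mem_nhds_iff] at hint
      obtain ⟨ε, hε, hball⟩ := hint
      set y : ℝ × ℝ := ((γ t).1 + ε/2 * Real.cos t, (γ t).2 + ε/2 * Real.sin t) with hy
      have hsub : y - γ t = (ε/2 * Real.cos t, ε/2 * Real.sin t) := by
        rw [hy, Prod.ext_iff]
        constructor <;> simp
      have hdist : dist y (γ t) < ε := by
        rw [dist_eq_norm, hsub, Prod.norm_def]
        have h1 : ‖ε/2 * Real.cos t‖ ≤ ε/2 := by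
          rw [Real.norm_eq_abs, abs_mul, abs_of_pos (by linarith : (0:ℝ) < ε/2)]
          calc ε/2 * |Real.cos t| ≤ ε/2 * 1 :=
            mul_le_mul_of_nonneg_left (Real.abs_cos_le_one t) (by linarith)
            _ = ε/2 := mul_one _
        have h2 : ‖ε/2 * Real.sin t‖ ≤ ε/2 := by
          rw [Real.norm_eq_abs, abs_mul, abs_of_pos (by linarith : (0:ℝ) < ε/2)]
          calc ε/2 * |Real.sin t| ≤ ε/2 * 1 :=
            mul_le_mul_of_nonneg_left (Real.abs_sin_le_one t) (by linarith)
            _ = ε/2 := mul_one _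
        calc max ‖ε/2 * Real.cos t‖ ‖ε/2 * Real.sin t‖ ≤ ε/2 := max_le h1 h2
          _ < ε := by linarith
      have hyK : y ∈ K := hball hdist
      have hyt : Real.cos t * y.1 + Real.sin t * y.2 ≤ f t := hyK t
      have hval : Real.cos t * y.1 + Real.sin t * y.2 = f t + ε/2 := by
        rw [hy]
        linear_combination hγval t + (ε/2) * Real.sin_sq_add_cos_sq t
      rw [hval] at hyt
      linarith
  exact ⟨K, hKcompact, hKconv, hKne, hsupp, hfr⟩
end

section
/- In any sequence of permutations of an n-element set (n ≥ 2) where consecutive permutations differ by a swap of adjacent elements and each pair of elements swaps exactly once (a half-period of an allowable sequence), the element that is first in the initial permutation ends up last in the final permutation. -/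
/-!
Write `σ i k` for the element in position `k` at time `i`, so that `(σ i).symm a` is the position
of `a`. An adjacent transposition preserves the relative order of every pair of elements except
the pair it swaps, whose order it reverses. As each pair is swapped exactly once, every pair ends
in the reverse of its initial order; in particular the initially first element ends behind every
other element, that is, last.
-/

theorem Equiv.image_pair_eq_pair_iff {α β : Type*} (e : α ≃ β) (u v : α) (a b : β) :
    ({e u, e v} : Set β) = {a, b} ↔ ({e.symm a, e.symm b} : Set α) = {u, v} := by
  simp only [Set.pair_eq_pair_iff, Equiv.symm_apply_eq, eq_comm (b := e _)]
  tauto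

theorem Fin.swap_adjacent_lt_swap_iff {n : ℕ} {p p' q r : Fin n} (hp : p'.val = p.val + 1) :
    Equiv.swap p p' q < Equiv.swap p p' r ↔ (q < r ↔ ({q, r} : Set (Fin n)) ≠ {p, p'}) := by
  rw [Ne, Set.pair_eq_pair_iff]
  simp only [Equiv.swap_apply_def, Fin.lt_def, Fin.ext_iff] at *
  split_ifs <;> omega

theorem Fin.last_iff_not_zero_of_flip_once {m : ℕ} (P : Fin (m + 1) → Prop) (i₀ : Fin m)
    (hflip : ∀ i : Fin m, P i.succ ↔ (P i.castSucc ↔ i ≠ i₀)) :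
    P (Fin.last m) ↔ ¬ P 0 := by
  have key : ∀ j : Fin (m + 1), P j ↔ (P 0 ↔ j ≤ i₀.castSucc) := by
    intro j
    induction j using Fin.induction with
    | zero => simp
    | succ i ih =>
      rw [hflip, ih, Fin.succ_le_castSucc_iff, Fin.castSucc_le_castSucc_iff]
      rcases lt_trichotomy i i₀ with h | rfl | h
      · simp [h.le, h.ne, h]
      · simp
      · simp [not_le.mpr h, h.ne', not_lt.mpr h.le]
  rw [key, iff_false_right (not_le.mpr (Fin.castSucc_lt_last i₀))]

section AdjacentSwapSequence

variable {n m : ℕ} {σ : Fin (m + 1) → Fin n ≃ Fin n} {pos : Fin m → Fin n}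
  {hpos : ∀ i, (pos i).val + 1 < n}

theorem symm_succ_apply_eq_swap
    (hstep : ∀ i : Fin m,
      σ i.succ = (Equiv.swap (pos i) ⟨(pos i).val + 1, hpos i⟩).trans (σ i.castSucc))
    (i : Fin m) (a : Fin n) :
    (σ i.succ).symm a =
      Equiv.swap (pos i) ⟨(pos i).val + 1, hpos i⟩ ((σ i.castSucc).symm a) := by
  simp [hstep i]

theorem symm_succ_lt_symm_succ_iff
    (hstep : ∀ i : Fin m,
      σ i.succ = (Equiv.swap (pos i) ⟨(pos i).val + 1, hpos i⟩).trans (σ i.castSucc))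
    (i : Fin m) (a b : Fin n) :
    (σ i.succ).symm a < (σ i.succ).symm b ↔
      ((σ i.castSucc).symm a < (σ i.castSucc).symm b ↔
        ({σ i.castSucc (pos i), σ i.castSucc ⟨(pos i).val + 1, hpos i⟩} : Set (Fin n)) ≠
          {a, b}) := by
  rw [symm_succ_apply_eq_swap hstep, symm_succ_apply_eq_swap hstep,
    Fin.swap_adjacent_lt_swap_iff rfl, Ne, Ne, ← Equiv.image_pair_eq_pair_iff]

theorem symm_last_lt_symm_last_of_lt
    (hstep : ∀ i : Fin m,
      σ i.succ = (Equiv.swap (pos i) ⟨(pos i).val + 1, hpos i⟩).trans (σ i.castSucc))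
    {a b : Fin n}
    (hswap : ∃! i : Fin m,
      ({σ i.castSucc (pos i), σ i.castSucc ⟨(pos i).val + 1, hpos i⟩} : Set (Fin n)) = {a, b})
    (h₀ : (σ 0).symm a < (σ 0).symm b) :
    (σ (Fin.last m)).symm b < (σ (Fin.last m)).symm a := by
  obtain ⟨i₀, hi₀, huniq⟩ := hswap
  have hab : a ≠ b := by
    rintro rfl
    exact lt_irrefl _ h₀
  have hflip : ∀ i : Fin m, (σ i.succ).symm a < (σ i.succ).symm b ↔
      ((σ i.castSucc).symm a < (σ i.castSucc).symm b ↔ i ≠ i₀) := fun i ↦ by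
    rw [symm_succ_lt_symm_succ_iff hstep]
    exact iff_congr Iff.rfl ⟨fun h hi ↦ h (hi ▸ hi₀), fun h he ↦ h (huniq i he)⟩
  have hlast :=
    Fin.last_iff_not_zero_of_flip_once (fun j ↦ (σ j).symm a < (σ j).symm b) i₀ hflip
  exact lt_of_le_of_ne (not_lt.mp fun h ↦ hlast.mp h h₀) ((σ _).symm.injective.ne hab).symm

end AdjacentSwapSequence

theorem Equiv.apply_eq_of_forall_symm_lt_symm {n : ℕ} (e : Fin n ≃ Fin n) (x : Fin n)
    (h : ∀ y ≠ x, e.symm y < e.symm x) (k : Fin n) (hk : k.val = n - 1) : e k = x := by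
  by_contra hne
  have := h _ hne
  simp only [Equiv.symm_apply_apply, Fin.lt_def, hk] at this
  omega

theorem allowable_half_period_first_to_last (n : ℕ) (hn : 2 ≤ n)
    (σ : Fin (n.choose 2 + 1) → (Fin n ≃ Fin n))
    (pos : Fin (n.choose 2) → Fin n)
    (hpos : ∀ i, (pos i).val + 1 < n)
    (hstep : ∀ i : Fin (n.choose 2),
      σ i.succ = (Equiv.swap (pos i) ⟨(pos i).val + 1, hpos i⟩).trans (σ i.castSucc))
    (hpairs : ∀ a b : Fin n, a ≠ b →
      ∃! i : Fin (n.choose 2),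
        ({σ i.castSucc (pos i), σ i.castSucc ⟨(pos i).val + 1, hpos i⟩} :
          Set (Fin n)) = {a, b}) :
    σ (Fin.last _) ⟨n - 1, by omega⟩ = σ 0 ⟨0, by omega⟩ := by
  refine Equiv.apply_eq_of_forall_symm_lt_symm _ _ (fun y hy ↦ ?_) _ rfl
  refine symm_last_lt_symm_last_of_lt hstep (hpairs _ _ hy.symm) ?_
  rw [Equiv.symm_apply_apply]
  refine lt_of_le_of_ne (Fin.le_def.mpr (Nat.zero_le _)) fun h ↦ hy ?_
  rw [h, Equiv.apply_symm_apply]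
end

section
/- Let P be a finite set of points in the plane such that no three are collinear and no two of the C(|P|,2) connecting lines are parallel. As a directed line rotates through a half-turn, the induced orders of P by orthogonal projection form a sequence of permutations in which consecutive permutations differ by one adjacent transposition and each pair of points is transposed exactly once. -/
open Real Set Function

noncomputable def dirProj (θ : ℝ) (v : ℝ × ℝ) : ℝ := cos θ * v.1 + sin θ * v.2

section Projection

variable {θ t a : ℝ} {u v : ℝ × ℝ}

theorem dirProj_sub (θ : ℝ) (u v : ℝ × ℝ) : dirProj θ (u - v) = dirProj θ u - dirProj θ v := by
  simp only [dirProj, Prod.fst_sub, Prod.snd_sub]; ring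

theorem dirProj_neg (θ : ℝ) (v : ℝ × ℝ) : dirProj θ (-v) = -dirProj θ v := by
  simp only [dirProj, Prod.fst_neg, Prod.snd_neg]; ring

theorem dirProj_eq_sin_mul (h : dirProj t v = 0) (θ : ℝ) :
    dirProj θ v = sin (θ - t) * dirProj (t + π / 2) v := by
  have hθ : θ = t + (θ - t) := by ring
  simp only [dirProj, cos_add_pi_div_two, sin_add_pi_div_two] at h ⊢
  rw [hθ, cos_add, sin_add, add_sub_cancel_left]
  linear_combination cos (θ - t) * h

theorem dirProj_add_pi_div_two_ne_zero (hv : v ≠ 0) (h : dirProj t v = 0) :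
    dirProj (t + π / 2) v ≠ 0 := by
  intro h'
  have hsq : dirProj t v ^ 2 + dirProj (t + π / 2) v ^ 2 = v.1 ^ 2 + v.2 ^ 2 := by
    simp only [dirProj, cos_add_pi_div_two, sin_add_pi_div_two]
    linear_combination (v.1 ^ 2 + v.2 ^ 2) * sin_sq_add_cos_sq t
  rw [h, h'] at hsq
  exact hv (Prod.ext (pow_eq_zero_iff two_ne_zero |>.1 (by nlinarith [sq_nonneg v.2]))
    (pow_eq_zero_iff two_ne_zero |>.1 (by nlinarith [sq_nonneg v.1])))

theorem det2_eq_zero_of_dirProj_eq_zero (hu : dirProj θ u = 0) (hv : dirProj θ v = 0) :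
    det2 u v = 0 := by
  simp only [dirProj, det2] at hu hv ⊢
  linear_combination (cos θ * v.2 - sin θ * v.1) * hu + (sin θ * u.1 - cos θ * u.2) * hv +
    (u.2 * v.1 - u.1 * v.2) * sin_sq_add_cos_sq θ

theorem dirProj_arg_add_pi_div_two (v : ℝ × ℝ) :
    dirProj (Complex.arg ⟨v.1, v.2⟩ + π / 2) v = 0 := by
  rcases eq_or_ne v 0 with rfl | hv
  · simp [dirProj]
  have hz : (⟨v.1, v.2⟩ : ℂ) ≠ 0 := fun h =>
    hv (Prod.ext (congrArg Complex.re h) (congrArg Complex.im h))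
  simp only [dirProj, cos_add_pi_div_two, sin_add_pi_div_two, Complex.cos_arg hz, Complex.sin_arg]
  ring

theorem Real.sin_neg_iff_of_mem_Ioo {x : ℝ} (hx : x ∈ Ioo (-π) π) : sin x < 0 ↔ x < 0 :=
  ⟨fun h => not_le.1 fun h0 => h.not_ge (sin_nonneg_of_nonneg_of_le_pi h0 hx.2.le),
    fun h => sin_neg_of_neg_of_neg_pi_lt h hx.1⟩

/-- The angle in `[a, a + π)` at which the direction is orthogonal to `v`; `arg v + π / 2` is
one such angle. -/
noncomputable def crossAngle (a : ℝ) (v : ℝ × ℝ) : ℝ :=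
  toIcoMod pi_pos a (Complex.arg ⟨v.1, v.2⟩ + π / 2)

theorem crossAngle_mem_Ico (a : ℝ) (v : ℝ × ℝ) : crossAngle a v ∈ Ico a (a + π) :=
  toIcoMod_mem_Ico _ _ _

theorem dirProj_crossAngle (a : ℝ) (v : ℝ × ℝ) : dirProj (crossAngle a v) v = 0 := by
  rw [dirProj_eq_sin_mul (dirProj_arg_add_pi_div_two v), crossAngle, ← self_sub_toIcoDiv_zsmul,
    sub_sub_cancel_left, zsmul_eq_mul, ← neg_mul, ← Int.cast_neg, sin_int_mul_pi, zero_mul]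

theorem eq_crossAngle_of_dirProj_eq_zero (hv : v ≠ 0) (hθ : θ ∈ Ico a (a + π))
    (h : dirProj θ v = 0) : θ = crossAngle a v := by
  have hc := crossAngle_mem_Ico a v
  rw [dirProj_eq_sin_mul (dirProj_crossAngle a v),
    mul_eq_zero, or_iff_left (dirProj_add_pi_div_two_ne_zero hv (dirProj_crossAngle a v)),
    sin_eq_zero_iff_of_lt_of_lt (by linarith [hθ.1, hc.2]) (by linarith [hθ.2, hc.1])] at h
  linarith

theorem crossAngle_neg (a : ℝ) (v : ℝ × ℝ) : crossAngle a (-v) = crossAngle a v := by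
  rcases eq_or_ne v 0 with rfl | hv
  · rw [neg_zero]
  refine (eq_crossAngle_of_dirProj_eq_zero hv (crossAngle_mem_Ico a _) ?_)
  rw [← neg_eq_zero, ← dirProj_neg, dirProj_crossAngle]

theorem crossAngle_mem_Ioo (ha : dirProj a v ≠ 0) : crossAngle a v ∈ Ioo a (a + π) := by
  obtain ⟨h₁, h₂⟩ := crossAngle_mem_Ico a v
  refine ⟨h₁.lt_of_ne fun h => ha ?_, h₂⟩
  rw [h, dirProj_crossAngle]

theorem lt_crossAngle_iff (hv : v ≠ 0) (ha : dirProj a v ≠ 0) (hθ : θ ∈ Ioo a (a + π)) :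
    θ < crossAngle a v ↔ 0 < dirProj θ v * dirProj a v := by
  have hc := crossAngle_mem_Ioo ha
  have hD := dirProj_add_pi_div_two_ne_zero hv (dirProj_crossAngle a v)
  have hsa : sin (a - crossAngle a v) < 0 :=
    (sin_neg_iff_of_mem_Ioo ⟨by linarith [hc.2], by linarith [hc.1, pi_pos]⟩).2
      (by linarith [hc.1])
  have hsθ := sin_neg_iff_of_mem_Ioo (x := θ - crossAngle a v)
    ⟨by linarith [hc.2, hθ.1], by linarith [hc.1, hθ.2]⟩
  rw [sub_neg] at hsθ
  rw [dirProj_eq_sin_mul (dirProj_crossAngle a v) θ, dirProj_eq_sin_mul (dirProj_crossAngle a v) a,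
    ← hsθ, ← smul_pos_iff_of_neg_left hsa, smul_eq_mul,
    ← mul_pos_iff_of_pos_right (mul_self_pos.2 hD)]
  ring_nf

theorem dirProj_flip_iff {θ θ' a : ℝ} {v : ℝ × ℝ} (hv : v ≠ 0) (ha : dirProj a v ≠ 0)
    (hθ : θ ∈ Ioo a (a + π)) (hθ' : θ' ∈ Ioo a (a + π)) (h : dirProj θ v ≠ 0)
    (h' : dirProj θ' v ≠ 0) :
    (0 < dirProj θ v ↔ dirProj θ' v < 0) ↔ (θ < crossAngle a v ↔ ¬θ' < crossAngle a v) := by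
  have hneg : ∀ x : ℝ, x ≠ 0 → (x < 0 ↔ ¬0 < x) := fun x hx =>
    ⟨fun h => h.not_gt, fun h => (not_lt.1 h).lt_of_ne hx⟩
  rw [lt_crossAngle_iff hv ha hθ, lt_crossAngle_iff hv ha hθ', mul_pos_iff, mul_pos_iff,
    hneg _ h, hneg _ h', hneg _ ha]
  tauto

end Projection

theorem exists_dirProj_ne_zero {ι : Type*} [Finite ι] {v : ι → ℝ × ℝ} (hv : ∀ i, v i ≠ 0) :
    ∃ θ, ∀ i, dirProj θ (v i) ≠ 0 := by
  obtain ⟨θ, hθ, hθS⟩ := ((Ico_infinite (lt_add_of_pos_right 0 pi_pos)).sdiff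
    (finite_range fun i => crossAngle 0 (v i))).nonempty
  exact ⟨θ, fun i h => hθS ⟨i, (eq_crossAngle_of_dirProj_eq_zero (hv i) hθ h).symm⟩⟩

section Pairs

variable {n : ℕ} (P : Fin n → ℝ × ℝ)

noncomputable def pairAngle (a : ℝ) : Sym2 (Fin n) → ℝ :=
  Sym2.lift ⟨fun p q => crossAngle a (P q - P p), fun p q => by
    dsimp only; rw [← neg_sub, crossAngle_neg]⟩

theorem pairAngle_mk (a : ℝ) (p q : Fin n) : pairAngle P a s(p, q) = crossAngle a (P q - P p) :=
  rfl

theorem pairAngle_injOn (hpar : ∀ i j k l : Fin n, i ≠ j → k ≠ l →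
      ({i, j} : Set (Fin n)) ≠ {k, l} → det2 (P j - P i) (P l - P k) ≠ 0) (a : ℝ) :
    InjOn (pairAngle P a) {z | ¬z.IsDiag} := by
  rintro ⟨p, q⟩ hpq ⟨k, l⟩ hkl h
  simp only [mem_ofPred_eq, Sym2.mk_isDiag_iff] at hpq hkl
  change pairAngle P a s(p, q) = pairAngle P a s(k, l) at h
  rw [Sym2.eq_iff, ← Set.pair_eq_pair_iff]
  by_contra hne
  refine hpar p q k l hpq hkl hne (det2_eq_zero_of_dirProj_eq_zero (dirProj_crossAngle a _) ?_)
  rw [pairAngle_mk, pairAngle_mk] at h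
  rw [h]
  exact dirProj_crossAngle a _

theorem pairAngle_mem_Ioo {a : ℝ} (ha : ∀ p q, p ≠ q → dirProj a (P q - P p) ≠ 0)
    {z : Sym2 (Fin n)} (hz : ¬z.IsDiag) : pairAngle P a z ∈ Ioo a (a + π) := by
  induction z using Sym2.ind with
  | h p q => exact crossAngle_mem_Ioo (ha p q (by simpa using hz))

end Pairs

section Sorting

variable {α : Type*} [LinearOrder α] {n : ℕ}

theorem Tuple.strictMono_comp_sort {f : Fin n → α} (hf : Injective f) :
    StrictMono (f ∘ Tuple.sort f) :=
  (Tuple.monotone_sort f).strictMono_of_injective (hf.comp (Equiv.injective _))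

theorem Tuple.eq_sort_of_strictMono {f : Fin n → α} {σ : Equiv.Perm (Fin n)}
    (h : StrictMono (f ∘ σ)) : σ = Tuple.sort f :=
  Tuple.eq_sort_iff.2 ⟨h.monotone, fun _ _ hij he => absurd he (h hij).ne⟩

theorem exists_equiv_fin_strictMono_comp {ι : Type*} [Fintype ι] {N : ℕ}
    (hN : Fintype.card ι = N) {f : ι → α} (hf : Injective f) :
    ∃ e : Fin N ≃ ι, StrictMono (f ∘ e) := by
  set e₀ : Fin N ≃ ι := (Fintype.equivFinOfCardEq hN).symm
  exact ⟨(Tuple.sort (f ∘ e₀)).trans e₀, Tuple.strictMono_comp_sort (hf.comp e₀.injective)⟩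

theorem Fin.swap_lt_swap_of_lt {k l i j : Fin n} (hkl : (l : ℕ) = k + 1) (hij : i < j)
    (hne : ¬(i = k ∧ j = l)) : Equiv.swap k l i < Equiv.swap k l j := by
  simp only [Equiv.swap_apply_def]
  rw [Fin.lt_def] at hij
  split_ifs <;> simp only [Fin.lt_def, Fin.ext_iff, not_and_or] at * <;> omega

theorem exists_sort_eq_swap_trans_sort {u u' : Fin n → α} (hu : Injective u)
    (hu' : Injective u') {z : Sym2 (Fin n)} (hz : ¬z.IsDiag)
    (hflip : ∀ p q, p ≠ q → ((u p < u q ↔ u' q < u' p) ↔ s(p, q) = z)) :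
    ∃ k l : Fin n, (l : ℕ) = k + 1 ∧ s(Tuple.sort u k, Tuple.sort u l) = z ∧
      Tuple.sort u' = (Equiv.swap k l).trans (Tuple.sort u) := by
  induction z using Sym2.ind with | h a b => ?_
  rw [Sym2.mk_isDiag_iff] at hz
  wlog hab : u a < u b generalizing a b
  · simpa only [Sym2.eq_swap] using this b a (Ne.symm hz)
      (fun p q hpq => by rw [hflip p q hpq, Sym2.eq_swap (a := a)])
      ((hu.ne hz).lt_or_gt.resolve_left hab)
  have hba : u' b < u' a := ((hflip a b hz).2 rfl).1 hab
  have hkeep : ∀ p q, u p < u q → s(p, q) ≠ s(a, b) → u' p < u' q := fun p q hpq hne =>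
    (hu'.ne (hpq.ne ∘ congrArg u)).lt_or_gt.resolve_right
      fun h => hne ((hflip p q (hpq.ne ∘ congrArg u)).1 (iff_of_true hpq h))
  set σ := Tuple.sort u
  have hmono := Tuple.strictMono_comp_sort hu
  set k := σ.symm a
  set l := σ.symm b
  have hσk : σ k = a := σ.apply_symm_apply a
  have hσl : σ l = b := σ.apply_symm_apply b
  have hkl : k < l := hmono.lt_iff_lt.1 (show u (σ k) < u (σ l) by rwa [hσk, hσl])
  -- A point strictly between `a` and `b` would keep its order with both, so they could not swap.
  have hadj : (l : ℕ) = k + 1 := by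
    by_contra hne
    set m : Fin n := ⟨k + 1, by omega⟩
    have hkm : k < m := Fin.lt_def.2 (Nat.lt_succ_self _)
    have hml : m < l := Fin.lt_def.2 (show (k : ℕ) + 1 < l by rw [Fin.lt_def] at hkl; omega)
    have hma : σ m ≠ a := fun h => hkm.ne' (σ.injective (h.trans hσk.symm))
    have hmb : σ m ≠ b := fun h => hml.ne (σ.injective (h.trans hσl.symm))
    have h₁ := hkeep a (σ m) (hσk ▸ hmono hkm) (by simp [hma, hmb])
    have h₂ := hkeep (σ m) b (hσl ▸ hmono hml) (by simp [hma, hmb])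
    exact (h₁.trans h₂).not_gt hba
  refine ⟨k, l, hadj, by rw [hσk, hσl], (Tuple.eq_sort_of_strictMono fun i j hij => ?_).symm⟩
  simp only [comp_apply, Equiv.trans_apply]
  by_cases hik : i = k ∧ j = l
  · rwa [hik.1, hik.2, Equiv.swap_apply_left, Equiv.swap_apply_right, hσk, hσl]
  refine hkeep _ _ (hmono (Fin.swap_lt_swap_of_lt hadj hij hik)) fun h => ?_
  rw [← hσk, ← hσl, Sym2.eq_iff] at h
  simp only [σ.injective.eq_iff, Equiv.swap_apply_eq_iff, Equiv.swap_apply_left,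
    Equiv.swap_apply_right] at h
  rcases h with ⟨rfl, rfl⟩ | ⟨rfl, rfl⟩
  · exact hij.not_gt hkl
  · exact hik ⟨rfl, rfl⟩

end Sorting

theorem exists_interlacing {α : Type*} [LinearOrder α] [DenselyOrdered α] {N : ℕ}
    {t : Fin N → α} (ht : StrictMono t) {a b : α} (hab : a < b) (hat : ∀ j, a < t j)
    (htb : ∀ j, t j < b) :
    ∃ Θ : Fin (N + 1) → α, a < Θ 0 ∧ Θ (Fin.last N) < b ∧
      ∀ m j, (Θ m < t j ↔ (m : ℕ) ≤ j) ∧ (t j < Θ m ↔ (j : ℕ) < m) := by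
  set lo : Fin (N + 1) → α := fun m => if h : (m : ℕ) = 0 then a else t ⟨m - 1, by omega⟩
  set hi : Fin (N + 1) → α := fun m => if h : (m : ℕ) < N then t ⟨m, h⟩ else b
  have hlo : ∀ (m : Fin (N + 1)) (j : Fin N), (j : ℕ) < m → t j ≤ lo m := fun m j hjm => by
    simp only [lo, dif_neg (show (m : ℕ) ≠ 0 by omega)]
    exact ht.monotone (Fin.le_def.2 (by simp only; omega))
  have hhi : ∀ (m : Fin (N + 1)) (j : Fin N), (m : ℕ) ≤ j → hi m ≤ t j := fun m j hmj => by
    simp only [hi, dif_pos (show (m : ℕ) < N by omega)]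
    exact ht.monotone (Fin.le_def.2 hmj)
  have hlohi : ∀ m, lo m < hi m := fun m => by
    simp only [lo, hi]
    split_ifs with h₀ h₁ h₁
    exacts [hat _, hab, ht (Fin.lt_def.2 (by simp only; omega)), htb _]
  choose Θ hΘlo hΘhi using fun m => exists_between (hlohi m)
  have hbelow : ∀ (m : Fin (N + 1)) (j : Fin N), (j : ℕ) < m → t j < Θ m := fun m j h =>
    (hlo m j h).trans_lt (hΘlo m)
  have habove : ∀ (m : Fin (N + 1)) (j : Fin N), (m : ℕ) ≤ j → Θ m < t j := fun m j h =>
    (hΘhi m).trans_le (hhi m j h)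
  refine ⟨Θ, by simpa [lo] using hΘlo 0, by simpa [hi] using hΘhi (Fin.last N), fun m j =>
    ⟨⟨fun h => not_lt.1 fun hjm => (hbelow m j hjm).not_gt h, habove m j⟩,
      ⟨fun h => not_le.1 fun hmj => (habove m j hmj).not_gt h, hbelow m j⟩⟩⟩

theorem exists_sample_angles {n : ℕ} {P : Fin n → ℝ × ℝ} (hinj : Injective P)
    (hpar : ∀ i j k l : Fin n, i ≠ j → k ≠ l →
      ({i, j} : Set (Fin n)) ≠ {k, l} → det2 (P j - P i) (P l - P k) ≠ 0) :
    ∃ (Θ : Fin (n.choose 2 + 1) → ℝ)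
      (pair : Fin (n.choose 2) ≃ {z : Sym2 (Fin n) // ¬z.IsDiag}),
      StrictMono Θ ∧ Θ (Fin.last _) < Θ 0 + π ∧ (∀ m, Injective fun p => dirProj (Θ m) (P p)) ∧
      ∀ i p q, p ≠ q → ((dirProj (Θ i.castSucc) (P p) < dirProj (Θ i.castSucc) (P q) ↔
        dirProj (Θ i.succ) (P q) < dirProj (Θ i.succ) (P p)) ↔ s(p, q) = pair i) := by
  have hv : ∀ p q : Fin n, p ≠ q → P q - P p ≠ 0 := fun p q h => sub_ne_zero.2 (hinj.ne h.symm)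
  obtain ⟨θ₀, hθ₀⟩ := exists_dirProj_ne_zero
    (v := fun x : {x : Fin n × Fin n // x.1 ≠ x.2} => P x.1.2 - P x.1.1) fun x => hv _ _ x.2
  replace hθ₀ : ∀ p q : Fin n, p ≠ q → dirProj θ₀ (P q - P p) ≠ 0 := fun p q h => hθ₀ ⟨(p, q), h⟩
  obtain ⟨pair, ht⟩ := exists_equiv_fin_strictMono_comp
    (f := fun z : {z : Sym2 (Fin n) // ¬z.IsDiag} => pairAngle P θ₀ z)
    (by rw [Sym2.card_subtype_not_diag, Fintype.card_fin]) (pairAngle_injOn P hpar θ₀).injective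
  set t := (fun z : {z : Sym2 (Fin n) // ¬z.IsDiag} => pairAngle P θ₀ z) ∘ pair
  have hidx : ∀ p q (h : p ≠ q), pairAngle P θ₀ s(p, q) = t (pair.symm ⟨s(p, q), by simpa⟩) :=
    fun p q h => by simp [t]
  have htwin : ∀ j, t j ∈ Ioo θ₀ (θ₀ + π) := fun j => pairAngle_mem_Ioo P hθ₀ (pair j).2
  obtain ⟨Θ, hΘ0, hΘN, hΘt⟩ := exists_interlacing ht (lt_add_of_pos_right θ₀ pi_pos)
    (fun j => (htwin j).1) (fun j => (htwin j).2)
  have hΘmono : StrictMono Θ := fun m m' h =>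
    ((hΘt m ⟨m, by omega⟩).1.2 le_rfl).trans ((hΘt m' ⟨m, by omega⟩).2.2 h)
  have hΘwin : ∀ m, Θ m ∈ Ioo θ₀ (θ₀ + π) := fun m =>
    ⟨hΘ0.trans_le (hΘmono.monotone (Fin.zero_le _)),
      (hΘmono.monotone (Fin.le_last _)).trans_lt hΘN⟩
  have hgen : ∀ m p q, p ≠ q → dirProj (Θ m) (P q - P p) ≠ 0 := fun m p q h h0 => by
    have hΘ := eq_crossAngle_of_dirProj_eq_zero (hv p q h) (Ioo_subset_Ico_self (hΘwin m)) h0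
    rw [← pairAngle_mk, hidx p q h] at hΘ
    have := hΘt m (pair.symm ⟨s(p, q), by simpa⟩)
    simp only [hΘ, lt_self_iff_false, false_iff, not_le, not_lt] at this
    omega
  refine ⟨Θ, pair, hΘmono, by linarith [hΘ0, hΘN], fun m p q hpq => ?_, fun i p q hpq => ?_⟩
  · by_contra hpq'
    exact hgen m p q hpq' (by rw [dirProj_sub, sub_eq_zero.2 hpq.symm])
  · have hpos : ∀ θ, dirProj θ (P p) < dirProj θ (P q) ↔ 0 < dirProj θ (P q - P p) := fun θ => by
      rw [dirProj_sub, sub_pos]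
    have hneg : ∀ θ, dirProj θ (P q) < dirProj θ (P p) ↔ dirProj θ (P q - P p) < 0 := fun θ => by
      rw [dirProj_sub, sub_neg]
    rw [hpos, hneg, dirProj_flip_iff (hv p q hpq) (hθ₀ p q hpq) (hΘwin _) (hΘwin _)
      (hgen _ p q hpq) (hgen _ p q hpq), ← pairAngle_mk, hidx p q hpq, (hΘt _ _).1, (hΘt _ _).1,
      Fin.val_castSucc, Fin.val_succ]
    have hi : s(p, q) = (pair i : Sym2 (Fin n)) ↔ (pair.symm ⟨s(p, q), by simpa⟩ : ℕ) = i := by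
      rw [Fin.val_inj, Equiv.symm_apply_eq, Subtype.ext_iff]
    rw [hi]
    omega

theorem rotating_line_allowable_sequence_general (n : ℕ) (P : Fin n → ℝ × ℝ)
    (hinj : Function.Injective P)
    (hpar : ∀ i j k l : Fin n, i ≠ j → k ≠ l →
      ({i, j} : Set (Fin n)) ≠ {k, l} → det2 (P j - P i) (P l - P k) ≠ 0) :
    ∃ (σ : Fin (n.choose 2 + 1) → (Fin n ≃ Fin n))
      (pos : Fin (n.choose 2) → Fin n)
      (hpos : ∀ i, (pos i).val + 1 < n)
      (θ : Fin (n.choose 2 + 1) → ℝ),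
      StrictMono θ ∧ θ (Fin.last _) < θ 0 + Real.pi ∧
      (∀ m (p q : Fin n), p < q →
        Real.cos (θ m) * (P (σ m p)).1 + Real.sin (θ m) * (P (σ m p)).2 <
        Real.cos (θ m) * (P (σ m q)).1 + Real.sin (θ m) * (P (σ m q)).2) ∧
      (∀ i : Fin (n.choose 2),
        σ i.succ = (Equiv.swap (pos i) ⟨(pos i).val + 1, hpos i⟩).trans
          (σ i.castSucc)) ∧
      (∀ a b : Fin n, a ≠ b →
        ∃! i : Fin (n.choose 2),
          ({σ i.castSucc (pos i), σ i.castSucc ⟨(pos i).val + 1, hpos i⟩} :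
            Set (Fin n)) = {a, b}) := by
  obtain ⟨Θ, pair, hΘ, hΘlast, hinjΘ, hflip⟩ := exists_sample_angles hinj hpar
  choose k l hkl hpair hswap using fun i : Fin (n.choose 2) =>
    exists_sort_eq_swap_trans_sort (hinjΘ i.castSucc) (hinjΘ i.succ) (pair i).2 (hflip i)
  have hpos : ∀ i, (k i : ℕ) + 1 < n := fun i => hkl i ▸ (l i).isLt
  have hl : ∀ i, l i = ⟨k i + 1, hpos i⟩ := fun i => Fin.ext (hkl i)
  refine ⟨fun m => Tuple.sort fun p => dirProj (Θ m) (P p), k, hpos, Θ, hΘ, hΘlast,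
    fun m p q hpq => ?_, fun i => ?_, fun a b hab => ?_⟩
  · exact Tuple.strictMono_comp_sort (hinjΘ m) hpq
  · rw [← hl]; exact hswap i
  · simp only [← hl, Set.pair_eq_pair_iff, ← Sym2.eq_iff, hpair]
    exact ⟨pair.symm ⟨s(a, b), by simpa⟩, by simp,
      fun j hj => pair.eq_symm_apply.2 (Subtype.ext hj)⟩

theorem rotating_line_allowable_sequence (n : ℕ) (P : Fin n → ℝ × ℝ)
    (hinj : Function.Injective P)
    (h3 : ∀ i j k : Fin n, i ≠ j → i ≠ k → j ≠ k →
      det2 (P j - P i) (P k - P i) ≠ 0)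
    (hpar : ∀ i j k l : Fin n, i ≠ j → k ≠ l →
      ({i, j} : Set (Fin n)) ≠ {k, l} → det2 (P j - P i) (P l - P k) ≠ 0) :
    ∃ (σ : Fin (n.choose 2 + 1) → (Fin n ≃ Fin n))
      (pos : Fin (n.choose 2) → Fin n)
      (hpos : ∀ i, (pos i).val + 1 < n)
      (θ : Fin (n.choose 2 + 1) → ℝ),
      StrictMono θ ∧ θ (Fin.last _) < θ 0 + Real.pi ∧
      (∀ m (p q : Fin n), p < q →
        Real.cos (θ m) * (P (σ m p)).1 + Real.sin (θ m) * (P (σ m p)).2 <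
        Real.cos (θ m) * (P (σ m q)).1 + Real.sin (θ m) * (P (σ m q)).2) ∧
      (∀ i : Fin (n.choose 2),
        σ i.succ = (Equiv.swap (pos i) ⟨(pos i).val + 1, hpos i⟩).trans
          (σ i.castSucc)) ∧
      (∀ a b : Fin n, a ≠ b →
        ∃! i : Fin (n.choose 2),
          ({σ i.castSucc (pos i), σ i.castSucc ⟨(pos i).val + 1, hpos i⟩} :
            Set (Fin n)) = {a, b}) :=
  rotating_line_allowable_sequence_general n P hinj hpar
end
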